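/- arXiv:1306.6044 — 8 statements merged into one kernel-verified Lean document; each statement's English description precedes it below -/
import Mathlib

section
/- Let g and h be integers with g ≥ h ≥ 2. There exists a constant C = C(g,h) > 0 such that for every positive integer n and every C_h[g] set A ⊆ {1,…,n}, we have |A| ≤ (g-1)^{1/h} · n^{1-1/h} + C · n^{1/2 - 1/(2h)}. -/
/-- `A` is a `C_h[g]` set: there do not exist a set `X` of `h` integers and `g` pairwise
distinct integers `k_1, …, k_g` such that `X + k_i ⊆ A` for every `i`. -/
def IsChgSet (h g : ℕ) (A : Set ℤ) : Prop :=
  ¬ ∃ (X : Finset ℤ) (k : Fin g → ℤ), X.card = h ∧ Function.Injective k ∧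
      ∀ i : Fin g, ∀ x ∈ X, x + k i ∈ A

/-!
Slide a window of length `s` along `[1, n]`: the `n + s` translates `[k, k + s)` cover every
element of `A` exactly `s` times. Translating an `h`-subset of `A ∩ [k, k + s)` back to `[0, s)`,
the `C_h[g]` property says each `h`-subset of `[0, s)` arises from at most `g - 1` windows, so
`∑ₖ C(aₖ, h) ≤ (g - 1) C(s, h)` with `aₖ = |A ∩ [k, k + s)|`. As `(a + 1 - h)^h ≤ h! C(a, h)`,
the power mean inequality gives
`s |A| ≤ (g - 1)^(1/h) s (n + s)^(1 - 1/h) + (h - 1)(n + s)`,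
and `s ≈ n^(1/2 + 1/(2h))` balances the two error terms at order `n^(1/2 - 1/(2h))`.
-/

open Finset

theorem Finset.card_filter_powersetCard_add_mem {G : Type*} [AddGroup G] [DecidableEq G]
    (A I : Finset G) (k : G) (h : ℕ) :
    #{X ∈ I.powersetCard h | ∀ x ∈ X, x + k ∈ A} =
      (#(A ∩ I.map (addRightEmbedding k))).choose h := by
  have hinter :
      A ∩ I.map (addRightEmbedding k) = {x ∈ I | x + k ∈ A}.map (addRightEmbedding k) := by
    ext y
    simp only [mem_inter, mem_map, mem_filter, addRightEmbedding_apply]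
    constructor
    · rintro ⟨hy, x, hx, rfl⟩; exact ⟨x, ⟨hx, hy⟩, rfl⟩
    · rintro ⟨x, ⟨hx, hxA⟩, rfl⟩; exact ⟨hxA, x, hx, rfl⟩
  rw [hinter, card_map, ← card_powersetCard]
  congr 1
  ext X
  simp only [mem_filter, mem_powersetCard, subset_iff]
  grind

theorem sum_card_inter_Ico_translates {A : Finset ℤ} {n : ℕ} (hA : ↑A ⊆ Set.Icc (1 : ℤ) n)
    (s : ℕ) :
    ∑ k ∈ Ioc (-(s : ℤ)) n, #(A ∩ (Ico 0 (s : ℤ)).map (addRightEmbedding k)) = s * #A := by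
  simp_rw [map_add_right_Ico, zero_add, ← filter_mem_eq_inter]
  calc ∑ k ∈ Ioc (-(s : ℤ)) n, #{a ∈ A | a ∈ Ico k ((s : ℤ) + k)}
      = ∑ a ∈ A, #{k ∈ Ioc (-(s : ℤ)) (n : ℤ) | a ∈ Ico k ((s : ℤ) + k)} :=
        (sum_card_bipartiteAbove_eq_sum_card_bipartiteBelow
          (fun a k => a ∈ Ico k ((s : ℤ) + k))).symm
    _ = ∑ a ∈ A, s := sum_congr rfl fun a ha => by
        have ha' := hA ha
        rw [Set.mem_Icc] at ha'
        have : {k ∈ Ioc (-(s : ℤ)) (n : ℤ) | a ∈ Ico k ((s : ℤ) + k)} = Ioc (a - s) a := by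
          ext k; simp only [mem_filter, mem_Ioc, mem_Ico]; omega
        rw [this, Int.card_Ioc]; omega
    _ = s * #A := by rw [sum_const, smul_eq_mul, mul_comm]

theorem Finset.sum_le_rpow_mul_card_rpow {ι : Type*} (K : Finset ι) {x : ι → ℝ}
    (hx : ∀ i ∈ K, 0 ≤ x i) {h : ℕ} (hh : h ≠ 0) {B : ℝ} (hB : ∑ i ∈ K, x i ^ h ≤ B) :
    ∑ i ∈ K, x i ≤ B ^ ((1 : ℝ) / h) * (#K : ℝ) ^ (1 - (1 : ℝ) / h) := by
  obtain ⟨m, rfl⟩ := Nat.exists_eq_succ_of_ne_zero hh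
  have hsum : 0 ≤ ∑ i ∈ K, x i := sum_nonneg hx
  have hB0 : 0 ≤ B := (sum_nonneg fun i hi => pow_nonneg (hx i hi) _).trans hB
  have hpow : (∑ i ∈ K, x i) ^ (m + 1) ≤ (#K : ℝ) ^ m * B :=
    (pow_sum_le_card_mul_sum_pow hx m).trans (by gcongr)
  have hexp :
      ((#K : ℝ) ^ m) ^ ((1 : ℝ) / (m + 1 : ℕ)) = (#K : ℝ) ^ (1 - (1 : ℝ) / (m + 1 : ℕ)) := by
    rw [← Real.rpow_natCast, ← Real.rpow_mul (Nat.cast_nonneg _)]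
    congr 1
    push_cast
    field_simp
    ring
  calc ∑ i ∈ K, x i = ((∑ i ∈ K, x i) ^ (m + 1)) ^ ((1 : ℝ) / (m + 1 : ℕ)) := by
        rw [one_div, Real.pow_rpow_inv_natCast hsum hh]
    _ ≤ ((#K : ℝ) ^ m * B) ^ ((1 : ℝ) / (m + 1 : ℕ)) := by gcongr
    _ = B ^ ((1 : ℝ) / (m + 1 : ℕ)) * (#K : ℝ) ^ (1 - (1 : ℝ) / (m + 1 : ℕ)) := by
        rw [Real.mul_rpow (by positivity) hB0, hexp, mul_comm]

theorem Real.add_rpow_le_rpow_add_mul_rpow_sub_one {x y p : ℝ} (hx : 0 < x) (hy : 0 ≤ y)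
    (hp0 : 0 ≤ p) (hp1 : p ≤ 1) : (x + y) ^ p ≤ x ^ p + y * x ^ (p - 1) := by
  have hxp : 0 ≤ x ^ p := Real.rpow_nonneg hx.le p
  have hyx : 0 ≤ y / x := div_nonneg hy hx.le
  calc (x + y) ^ p = x ^ p * (1 + y / x) ^ p := by
        rw [← Real.mul_rpow hx.le (by linarith)]; congr 1; field_simp
    _ ≤ x ^ p * (1 + y / x) := by
        gcongr
        exact (rpow_one_add_le_one_add_mul_self (by linarith) hp0 hp1).trans
          (by nlinarith)
    _ = x ^ p + y * x ^ (p - 1) := by rw [Real.rpow_sub_one hx.ne']; ring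

theorem Real.add_rpow_le_sq_add_two_mul {x y p u : ℝ} (hx : 0 < x) (hy : 0 ≤ y) (hp0 : 0 ≤ p)
    (hp1 : p ≤ 1) (hu : 0 ≤ u) (hxp : x ^ p = u ^ 2) (hyu : u * y ≤ 2 * x) :
    (x + y) ^ p ≤ u ^ 2 + 2 * u := by
  refine (add_rpow_le_rpow_add_mul_rpow_sub_one hx hy hp0 hp1).trans ?_
  rw [rpow_sub_one hx.ne', hxp, add_le_add_iff_left, mul_div_assoc', div_le_iff₀ hx]
  nlinarith

theorem exists_nat_mul_mem_Icc_two_mul {u x : ℝ} (hu : 0 < u) (hux : u ≤ x) :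
    ∃ s : ℕ, s ≠ 0 ∧ u * s ∈ Set.Icc x (2 * x) := by
  have hxu : 1 ≤ x / u := (one_le_div hu).mpr hux
  refine ⟨⌈x / u⌉₊, (Nat.ceil_pos.mpr (by linarith)).ne', ?_, ?_⟩
  · rw [← div_le_iff₀' hu]; exact Nat.le_ceil _
  · rw [← le_div_iff₀' hu, mul_div_assoc]
    exact Nat.ceil_le_two_mul (by linarith)

namespace IsChgSet

variable {h g : ℕ} {A : Finset ℤ}

theorem card_filter_translates_le (hA : IsChgSet h g ↑A) {X : Finset ℤ} (hX : #X = h)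
    (K : Finset ℤ) : #{k ∈ K | ∀ x ∈ X, x + k ∈ A} ≤ g - 1 := by
  by_contra! hlt
  obtain ⟨S, hS, hSg⟩ :=
    exists_subset_card_eq (s := {k ∈ K | ∀ x ∈ X, x + k ∈ A}) (n := g) (by omega)
  refine hA ⟨X, fun i => S.orderEmbOfFin hSg i, hX, (S.orderEmbOfFin hSg).injective, fun i => ?_⟩
  exact (mem_filter.mp (hS (S.orderEmbOfFin_mem hSg i))).2

theorem sum_choose_card_inter_le (hA : IsChgSet h g ↑A) (I K : Finset ℤ) :
    ∑ k ∈ K, (#(A ∩ I.map (addRightEmbedding k))).choose h ≤ (g - 1) * (#I).choose h := by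
  simp_rw [← card_filter_powersetCard_add_mem]
  calc ∑ k ∈ K, #{X ∈ I.powersetCard h | ∀ x ∈ X, x + k ∈ A}
      = ∑ X ∈ I.powersetCard h, #{k ∈ K | ∀ x ∈ X, x + k ∈ A} :=
        sum_card_bipartiteAbove_eq_sum_card_bipartiteBelow (fun k X => ∀ x ∈ X, x + k ∈ A)
    _ ≤ ∑ X ∈ I.powersetCard h, (g - 1) :=
        sum_le_sum fun X hX => hA.card_filter_translates_le (mem_powersetCard.mp hX).2 K
    _ = (g - 1) * (#I).choose h := by rw [sum_const, card_powersetCard, smul_eq_mul, mul_comm]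

theorem sum_pow_le (hA : IsChgSet h g ↑A) (I K : Finset ℤ) :
    ∑ k ∈ K, (#(A ∩ I.map (addRightEmbedding k)) + 1 - h) ^ h ≤ (g - 1) * #I ^ h := by
  calc ∑ k ∈ K, (#(A ∩ I.map (addRightEmbedding k)) + 1 - h) ^ h
      ≤ ∑ k ∈ K, h.factorial * (#(A ∩ I.map (addRightEmbedding k))).choose h := by
        gcongr with k
        rw [← Nat.descFactorial_eq_factorial_mul_choose]
        exact Nat.pow_sub_le_descFactorial _ _
    _ ≤ h.factorial * ((g - 1) * (#I).choose h) := by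
        rw [← mul_sum]; exact Nat.mul_le_mul_left _ (hA.sum_choose_card_inter_le I K)
    _ ≤ (g - 1) * #I ^ h := by
        rw [mul_left_comm, ← Nat.descFactorial_eq_factorial_mul_choose]
        exact Nat.mul_le_mul_left _ (Nat.descFactorial_le_pow _ _)

theorem card_le_add_div (hg : 1 ≤ g) (hh : h ≠ 0) (hA : IsChgSet h g ↑A) {n : ℕ}
    (hAn : ↑A ⊆ Set.Icc (1 : ℤ) n) {s : ℕ} (hs : s ≠ 0) :
    (#A : ℝ) ≤ ((g : ℝ) - 1) ^ ((1 : ℝ) / h) * ((n : ℝ) + s) ^ (1 - (1 : ℝ) / h)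
      + ((h : ℝ) - 1) * (n + s) / s := by
  set K := Ioc (-(s : ℤ)) n
  set a : ℤ → ℕ := fun k => #(A ∩ (Ico 0 (s : ℤ)).map (addRightEmbedding k))
  have hK : #K = n + s := by simp only [K, Int.card_Ioc]; omega
  have hsplit : s * #A ≤ ∑ k ∈ K, (a k + 1 - h) + #K * (h - 1) := by
    rw [← sum_card_inter_Ico_translates hAn s, ← smul_eq_mul, ← sum_const, ← sum_add_distrib]
    exact sum_le_sum fun k _ => show a k ≤ _ by omega
  have hpow : ∑ k ∈ K, ((a k + 1 - h : ℕ) : ℝ) ^ h ≤ ((g : ℝ) - 1) * (s : ℝ) ^ h := by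
    have := hA.sum_pow_le (Ico 0 (s : ℤ)) K
    rw [Int.card_Ico, sub_zero, Int.toNat_natCast] at this
    rw [← Nat.cast_pred hg]
    exact_mod_cast this
  have hholder := sum_le_rpow_mul_card_rpow K (fun k _ => Nat.cast_nonneg _) hh hpow
  have hg1 : (1 : ℝ) ≤ g := Nat.one_le_cast.mpr hg
  rw [Real.mul_rpow (by linarith) (by positivity), one_div,
    Real.pow_rpow_inv_natCast (Nat.cast_nonneg _) hh, hK, ← one_div] at hholder
  have hcount : (s : ℝ) * #A ≤
      s * (((g : ℝ) - 1) ^ ((1 : ℝ) / h) * ((n : ℝ) + s) ^ (1 - (1 : ℝ) / h))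
        + ((h : ℝ) - 1) * (n + s) := by
    have := (Nat.cast_le (α := ℝ)).mpr hsplit
    push_cast [hK, Nat.cast_pred (Nat.one_le_iff_ne_zero.mpr hh)] at this hholder
    linarith
  have hs0 : (0 : ℝ) < s := by positivity
  calc (#A : ℝ) = s * #A / s := by field_simp
    _ ≤ (s * (((g : ℝ) - 1) ^ ((1 : ℝ) / h) * ((n : ℝ) + s) ^ (1 - (1 : ℝ) / h))
          + ((h : ℝ) - 1) * (n + s)) / s := by gcongr
    _ = _ := by field_simp

end IsChgSet

theorem stmt0 (g h : ℕ) (hgh : h ≤ g) (hh : 2 ≤ h) :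
    ∃ C : ℝ, 0 < C ∧ ∀ n : ℕ, 0 < n → ∀ A : Finset ℤ,
      ↑A ⊆ Set.Icc (1 : ℤ) n → IsChgSet h g ↑A →
      (A.card : ℝ) ≤ ((g : ℝ) - 1) ^ ((1 : ℝ) / h) * (n : ℝ) ^ (1 - (1 : ℝ) / h)
        + C * (n : ℝ) ^ ((1 : ℝ) / 2 - 1 / (2 * h)) := by
  have hg1 : (1 : ℝ) ≤ g := by exact_mod_cast (by omega : 1 ≤ g)
  have hh1 : (1 : ℝ) ≤ h := by exact_mod_cast (by omega : 1 ≤ h)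
  set G := ((g : ℝ) - 1) ^ ((1 : ℝ) / h)
  have hG : 0 ≤ G := Real.rpow_nonneg (by linarith) _
  refine ⟨2 * (G + h), by positivity, fun n hn A hAn hA => ?_⟩
  set p : ℝ := 1 - 1 / h
  have hp0 : 0 ≤ p := sub_nonneg.mpr ((div_le_one (by positivity)).mpr hh1)
  have hp1 : p ≤ 1 := sub_le_self _ (by positivity)
  have hn1 : (1 : ℝ) ≤ n := by exact_mod_cast hn
  set u := (n : ℝ) ^ (p / 2)
  have hu1 : 1 ≤ u := Real.one_le_rpow hn1 (by linarith)
  have hun : u ≤ n := Real.rpow_le_self_of_one_le hn1 (by linarith)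
  have hnp : (n : ℝ) ^ p = u ^ 2 := by
    rw [← Real.rpow_natCast, ← Real.rpow_mul (by linarith)]; norm_num
  rw [show (1 : ℝ) / 2 - 1 / (2 * h) = p / 2 by ring, hnp]
  obtain ⟨s, hs, hsl, hsu⟩ := exists_nat_mul_mem_Icc_two_mul (by linarith) hun
  have hs0 : (0 : ℝ) < s := by positivity
  have hpow := Real.add_rpow_le_sq_add_two_mul (by linarith) hs0.le hp0 hp1 (by linarith) hnp hsu
  have hratio : ((n : ℝ) + s) / s ≤ 2 * u := by
    rw [div_le_iff₀ hs0]; nlinarith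
  calc (#A : ℝ) ≤ G * ((n : ℝ) + s) ^ p + ((h : ℝ) - 1) * (n + s) / s :=
        hA.card_le_add_div (by omega) (by omega) hAn hs
    _ ≤ G * (u ^ 2 + 2 * u) + h * (2 * u) := by
        rw [mul_div_assoc]
        gcongr
        · linarith
    _ ≤ G * u ^ 2 + 2 * (G + h) * u := by nlinarith
end

section
/- Let g and h be integers with g ≥ h ≥ 2. There exists a constant c = c(g,h) > 0 such that for every sufficiently large positive integer n there exists a weak-C_h[g] set A ⊆ {1,…,n} with |A| ≥ c · n^{(1 - 1/h)(1 - 1/g)(1 + 1/(hg - 1))}. -/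
/-!
Deletion method. Call a union of `g` pairwise disjoint translates of an `h`-set *bad*; it has
`h * g` elements, and a set containing no bad set is weak-`C_h[g]`. A bad subset of `[1, n]` is
determined by its first translate and the `g - 1` shifts of the others relative to it, so there
are at most `C(n, h) (2n + 1)^(g - 1)` of them. Some `s`-subset of `[1, n]` contains at most the
average number `C(n, h) (2n + 1)^(g - 1) C(s, hg) / C(n, hg)` of bad sets, which is `≤ s / 2`
once `s ≍ n^α` with `α = (h - 1)(g - 1) / (hg - 1)`; deleting one point from each of them leaves
a weak-`C_h[g]` set of size at least `s / 2`.
-/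

/-- `A` is a weak-`C_h[g]` set: there do not exist a set `X` of `h` integers and `g` pairwise
distinct integers `k_1, …, k_g` such that the translates `X + k_1, …, X + k_g` are pairwise
disjoint and each `X + k_i ⊆ A`. -/
def IsWeakChgSet (h g : ℕ) (A : Set ℤ) : Prop :=
  ¬ ∃ (X : Finset ℤ) (k : Fin g → ℤ), X.card = h ∧ Function.Injective k ∧
      (∀ i j : Fin g, i ≠ j →
        Disjoint (X.image (· + k i)) (X.image (· + k j))) ∧
      ∀ i : Fin g, ∀ x ∈ X, x + k i ∈ A

open Finset Filter
open scoped Nat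

section

variable {α : Type*} [DecidableEq α]

theorem Finset.exists_subset_forall_not_subset_card_le (A : Finset α) (F : Finset (Finset α))
    (hF : ∀ U ∈ F, U.Nonempty) : ∃ B ⊆ A, (∀ U ∈ F, ¬U ⊆ B) ∧ #A ≤ #B + #F := by
  choose pick hpick using hF
  set D := F.attach.image fun U => pick U.1 U.2
  refine ⟨A \ D, sdiff_subset, fun U hU hUB => ?_, ?_⟩
  · exact (mem_sdiff.1 (hUB (hpick U hU))).2 (mem_image.2 ⟨⟨U, hU⟩, mem_attach _ _, rfl⟩)
  · calc #A ≤ #(A \ D) + #D := card_le_card_sdiff_add_card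
      _ ≤ #(A \ D) + #F := by
        gcongr
        exact card_image_le.trans (card_attach).le

theorem Finset.exists_powersetCard_choose_mul_card_filter_subset_le {T : Finset α}
    {F : Finset (Finset α)} {m s : ℕ} (hF : ∀ U ∈ F, U ⊆ T ∧ #U = m) (hms : m ≤ s)
    (hsT : s ≤ #T) :
    ∃ A ⊆ T, #A = s ∧ (#T).choose m * #(F.filter (· ⊆ A)) ≤ #F * s.choose m := by
  set P := T.powersetCard s
  have hsum : ∑ A ∈ P, #(F.filter (· ⊆ A)) = #F * (#T - m).choose (s - m) := by
    refine (sum_card_bipartiteAbove_eq_sum_card_bipartiteBelow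
      (r := fun (A U : Finset α) => U ⊆ A)).trans ?_
    rw [← smul_eq_mul, ← sum_const]
    refine sum_congr rfl fun U hU => ?_
    rw [bipartiteBelow, card_filter_powersetCard_subset U T s (hF U hU).1 ((hF U hU).2 ▸ hms),
      (hF U hU).2]
  obtain ⟨A, hA, hmin⟩ := P.exists_min_image (fun A => #(F.filter (· ⊆ A)))
    (powersetCard_nonempty.2 hsT)
  obtain ⟨hAT, hAs⟩ := mem_powersetCard.1 hA
  refine ⟨A, hAT, hAs, Nat.le_of_mul_le_mul_left ?_ (Nat.choose_pos hsT)⟩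
  calc (#T).choose s * ((#T).choose m * #(F.filter (· ⊆ A)))
      = (#T).choose m * (#P • #(F.filter (· ⊆ A))) := by
        rw [card_powersetCard, smul_eq_mul]; ring
    _ ≤ (#T).choose m * (#F * (#T - m).choose (s - m)) := by
        rw [← hsum]; gcongr; exact card_nsmul_le_sum _ _ _ hmin
    _ = (#T).choose s * (#F * s.choose m) := by
        rw [← mul_assoc, mul_comm _ #F, mul_assoc, ← Nat.choose_mul hms]; ring

end

def IsDisjointTranslateUnion (h g : ℕ) (U : Finset ℤ) : Prop :=
  ∃ (X : Finset ℤ) (k : Fin g → ℤ), #X = h ∧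
    (∀ i j : Fin g, i ≠ j → Disjoint (X.image (· + k i)) (X.image (· + k j))) ∧
    U = univ.biUnion fun i => X.image (· + k i)

namespace IsDisjointTranslateUnion

variable {h g : ℕ} {U : Finset ℤ}

theorem card_eq (hU : IsDisjointTranslateUnion h g U) : #U = h * g := by
  obtain ⟨X, k, hX, hdisj, rfl⟩ := hU
  rw [card_biUnion fun i _ j _ hij => hdisj i j hij]
  simp only [card_image_of_injective _ (add_left_injective _), hX, sum_const, card_univ,
    Fintype.card_fin, smul_eq_mul, mul_comm]

theorem nonempty (hU : IsDisjointTranslateUnion h g U) (hh : 0 < h) (hg : 0 < g) :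
    U.Nonempty := by
  rw [← card_pos, hU.card_eq]
  positivity

end IsDisjointTranslateUnion

theorem isWeakChgSet_of_forall_not_subset {h g : ℕ} {A : Set ℤ}
    (hA : ∀ U, IsDisjointTranslateUnion h g U → ¬(U : Set ℤ) ⊆ A) : IsWeakChgSet h g A := by
  rintro ⟨X, k, hX, -, hdisj, hmem⟩
  refine hA _ ⟨X, k, hX, hdisj, rfl⟩ ?_
  intro u hu
  simp only [coe_biUnion, coe_image, Set.mem_iUnion, Set.mem_image] at hu
  obtain ⟨i, -, x, hx, rfl⟩ := hu
  exact hmem i x hx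

open Classical in
theorem card_filter_isDisjointTranslateUnion_le (h g n : ℕ) (hh : 0 < h) :
    #((Icc (1 : ℤ) n).powerset.filter (IsDisjointTranslateUnion h (g + 1))) ≤
      n.choose h * (2 * n + 1) ^ g := by
  set T := Icc (1 : ℤ) n
  set D := Icc (-(n : ℤ)) n
  let build : Finset ℤ × (Fin g → ℤ) → Finset ℤ := fun p =>
    univ.biUnion fun i => p.1.image (· + Fin.cons (α := fun _ => ℤ) 0 p.2 i)
  calc #(T.powerset.filter (IsDisjointTranslateUnion h (g + 1)))
      ≤ #((T.powersetCard h ×ˢ Fintype.piFinset fun _ => D).image build) := by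
        refine card_le_card fun U hU => ?_
        obtain ⟨hUT, X, k, hX, -, rfl⟩ := mem_filter.1 hU
        have hkT : ∀ i, X.image (· + k i) ⊆ T := fun i =>
          (subset_biUnion_of_mem _ (mem_univ i)).trans (mem_powerset.1 hUT)
        obtain ⟨x, hx⟩ : X.Nonempty := card_pos.1 (hX ▸ hh)
        refine mem_image.2 ⟨(X.image (· + k 0), fun j => k j.succ - k 0),
          mem_product.2 ⟨mem_powersetCard.2 ⟨hkT 0, ?_⟩, Fintype.mem_piFinset.2 fun j => ?_⟩, ?_⟩
        · rw [card_image_of_injective _ (add_left_injective _), hX]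
        · have h0 := mem_Icc.1 (hkT 0 (mem_image_of_mem _ hx))
          have hj := mem_Icc.1 (hkT j.succ (mem_image_of_mem _ hx))
          exact mem_Icc.2 ⟨by dsimp only; omega, by dsimp only; omega⟩
        · refine biUnion_congr rfl fun i _ => ?_
          rw [image_image]
          refine image_congr fun y _ => ?_
          induction i using Fin.cases <;> simp
    _ ≤ #(T.powersetCard h ×ˢ Fintype.piFinset fun _ => D) := card_image_le
    _ = n.choose h * (2 * n + 1) ^ g := by
        simp only [card_product, card_powersetCard, Fintype.card_piFinset, prod_const,
          card_univ, Fintype.card_fin, T, D, Int.card_Icc]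
        congr 2 <;> omega

theorem Nat.pow_le_two_pow_mul_factorial_mul_choose {n m : ℕ} (hmn : 2 * m ≤ n) :
    n ^ m ≤ 2 ^ m * m ! * n.choose m :=
  calc n ^ m ≤ (2 * (n + 1 - m)) ^ m := Nat.pow_le_pow_left (by omega) m
    _ = 2 ^ m * (n + 1 - m) ^ m := mul_pow ..
    _ ≤ 2 ^ m * n.descFactorial m := Nat.mul_le_mul_left _ (Nat.pow_sub_le_descFactorial n m)
    _ = 2 ^ m * m ! * n.choose m := by rw [Nat.descFactorial_eq_factorial_mul_choose, mul_assoc]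

theorem two_mul_choose_mul_choose_le {h g n s : ℕ} (hh : 0 < h) (hg : 0 < g)
    (hn : 2 * (h * g) ≤ n)
    (hs : 2 ^ (h * g + 1) * 3 ^ (g - 1) * (h * g)! * s ^ (h * g - 1) ≤ n ^ ((h - 1) * (g - 1))) :
    2 * (n.choose h * (2 * n + 1) ^ (g - 1) * s.choose (h * g)) ≤ s * n.choose (h * g) := by
  obtain ⟨h, rfl⟩ := Nat.exists_eq_add_one_of_ne_zero hh.ne'
  obtain ⟨g, rfl⟩ := Nat.exists_eq_add_one_of_ne_zero hg.ne'
  set m := (h + 1) * (g + 1)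
  have hm : 0 < m := by positivity
  have hsm : s ^ m = s ^ (m - 1) * s := by rw [← pow_succ, Nat.sub_add_cancel hm]
  simp only [Nat.add_sub_cancel] at hs
  refine Nat.le_of_mul_le_mul_right ?_ (by positivity : 0 < 2 ^ m * m !)
  calc 2 * ((n.choose (h + 1) * (2 * n + 1) ^ g) * s.choose m) * (2 ^ m * m !)
      ≤ 2 * (n ^ (h + 1) * (3 * n) ^ g * s ^ m) * (2 ^ m * m !) := by
        gcongr
        · exact Nat.choose_le_pow _ _
        · omega
        · exact Nat.choose_le_pow _ _
    _ = 2 ^ (m + 1) * 3 ^ g * m ! * s ^ (m - 1) * n ^ (h + 1 + g) * s := by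
        rw [hsm, mul_pow]
        ring
    _ ≤ n ^ (h * g) * n ^ (h + 1 + g) * s := by gcongr
    _ = n ^ m * s := by
        rw [← pow_add]
        congr 2
        ring
    _ ≤ 2 ^ m * m ! * n.choose m * s := by
        gcongr
        exact Nat.pow_le_two_pow_mul_factorial_mul_choose hn
    _ = s * n.choose m * (2 ^ m * m !) := by ring

theorem exists_isWeakChgSet_le_two_mul_card {h g n s : ℕ} (hh : 0 < h) (hg : 0 < g)
    (hn : 2 * (h * g) ≤ n) (hms : h * g ≤ s) (hsn : s ≤ n)
    (hs : 2 ^ (h * g + 1) * 3 ^ (g - 1) * (h * g)! * s ^ (h * g - 1) ≤ n ^ ((h - 1) * (g - 1))) :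
    ∃ A : Finset ℤ, ↑A ⊆ Set.Icc (1 : ℤ) n ∧ IsWeakChgSet h g ↑A ∧ s ≤ 2 * #A := by
  classical
  obtain ⟨g, rfl⟩ := Nat.exists_eq_add_one_of_ne_zero hg.ne'
  set T := Icc (1 : ℤ) n
  set F := T.powerset.filter (IsDisjointTranslateUnion h (g + 1))
  have hT : #T = n := by simp [T]
  have hF : ∀ U ∈ F, U ⊆ T ∧ #U = h * (g + 1) := fun U hU =>
    ⟨mem_powerset.1 (mem_filter.1 hU).1, (mem_filter.1 hU).2.card_eq⟩
  obtain ⟨A, hAT, hAs, hA⟩ :=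
    exists_powersetCard_choose_mul_card_filter_subset_le hF hms (hT ▸ hsn)
  obtain ⟨B, hBA, hB, hAB⟩ := A.exists_subset_forall_not_subset_card_le (F.filter (· ⊆ A))
    fun U hU => (mem_filter.1 (mem_filter.1 hU).1).2.nonempty hh hg
  refine ⟨B, fun x hx => by simpa [T] using hAT (hBA hx), ?_, ?_⟩
  · refine isWeakChgSet_of_forall_not_subset fun U hU hUB => hB U ?_ (coe_subset.1 hUB)
    have hUA : U ⊆ A := (coe_subset.1 hUB).trans hBA
    exact mem_filter.2 ⟨mem_filter.2 ⟨mem_powerset.2 (hUA.trans hAT), hU⟩, hUA⟩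
  · have hbad : 2 * #(F.filter (· ⊆ A)) ≤ s := by
      refine Nat.le_of_mul_le_mul_left ?_ (Nat.choose_pos (hms.trans hsn))
      calc n.choose (h * (g + 1)) * (2 * #(F.filter (· ⊆ A)))
          ≤ 2 * (#F * s.choose (h * (g + 1))) := by rw [← hT]; linarith
        _ ≤ 2 * (n.choose h * (2 * n + 1) ^ g * s.choose (h * (g + 1))) := by
          gcongr
          exact card_filter_isDisjointTranslateUnion_le h g n hh
        _ ≤ s * n.choose (h * (g + 1)) := two_mul_choose_mul_choose_le hh hg hn hs
        _ = n.choose (h * (g + 1)) * s := mul_comm ..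
    omega

theorem mul_floor_rpow_div_pow_le (K n a q : ℕ) (hK : 0 < K) (hq : 0 < q) :
    K * ⌊(n : ℝ) ^ ((a : ℝ) / q) / K⌋₊ ^ q ≤ n ^ a := by
  have hKR : (1 : ℝ) ≤ K := by exact_mod_cast hK
  have hpow : ((n : ℝ) ^ ((a : ℝ) / q)) ^ q = (n : ℝ) ^ a := by
    rw [← Real.rpow_natCast, ← Real.rpow_mul n.cast_nonneg, div_mul_cancel₀ _ (by positivity),
      Real.rpow_natCast]
  have : (K : ℝ) * ⌊(n : ℝ) ^ ((a : ℝ) / q) / K⌋₊ ^ q ≤ (n : ℝ) ^ a :=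
    calc (K : ℝ) * ⌊(n : ℝ) ^ ((a : ℝ) / q) / K⌋₊ ^ q
        ≤ K * ((n : ℝ) ^ ((a : ℝ) / q) / K) ^ q := by gcongr; exact Nat.floor_le (by positivity)
      _ = (n : ℝ) ^ a * (K / K ^ q) := by rw [div_pow, hpow]; ring
      _ ≤ (n : ℝ) ^ a * 1 := by
        gcongr
        exact div_le_one_of_le₀ (le_self_pow₀ hKR hq.ne') (by positivity)
      _ = (n : ℝ) ^ a := mul_one _
  exact_mod_cast this

theorem weakChg_exponent_eq {h g : ℕ} (hh : 2 ≤ h) (hg : 1 ≤ g) :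
    (1 - (1 : ℝ) / h) * (1 - (1 : ℝ) / g) * (1 + 1 / ((h : ℝ) * g - 1)) =
      (((h - 1) * (g - 1) : ℕ) : ℝ) / ((h * g - 1 : ℕ) : ℝ) := by
  have hhR : (2 : ℝ) ≤ h := by exact_mod_cast hh
  have hgR : (1 : ℝ) ≤ g := by exact_mod_cast hg
  have hhg : (h : ℝ) * g - 1 ≠ 0 := by nlinarith
  rw [Nat.cast_mul, Nat.cast_sub (by omega), Nat.cast_sub hg, Nat.cast_sub (by nlinarith),
    Nat.cast_mul, Nat.cast_one]
  field_simp
  ring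

theorem eventually_floor_rpow_div_bounds (K m : ℕ) (hK : 0 < K) {α : ℝ} (hα : 0 < α)
    (hα1 : α ≤ 1) :
    ∀ᶠ n : ℕ in atTop, 2 * m ≤ n ∧ m ≤ ⌊(n : ℝ) ^ α / K⌋₊ ∧ ⌊(n : ℝ) ^ α / K⌋₊ ≤ n ∧
      (n : ℝ) ^ α / (2 * K) ≤ ⌊(n : ℝ) ^ α / K⌋₊ := by
  filter_upwards [((tendsto_rpow_atTop hα).comp tendsto_natCast_atTop_atTop).eventually_ge_atTop
    ((K : ℝ) * (m + 2)), eventually_ge_atTop (2 * m), eventually_ge_atTop 1] with n hnα hnm hn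
  set x := (n : ℝ) ^ α / K
  have hxm : (m : ℝ) + 2 ≤ x := by rw [le_div_iff₀ (by positivity), mul_comm]; exact hnα
  have hxn : x ≤ n :=
    calc x ≤ (n : ℝ) ^ α := div_le_self (by positivity) (by exact_mod_cast hK)
      _ ≤ n := Real.rpow_le_self_of_one_le (by exact_mod_cast hn) hα1
  have hsx : x - 1 < ⌊x⌋₊ := Nat.sub_one_lt_floor x
  refine ⟨hnm, Nat.le_floor (by linarith), Nat.floor_le_of_le hxn, ?_⟩
  rw [mul_comm, ← div_div]
  linarith

theorem stmt1 (g h : ℕ) (hgh : h ≤ g) (hh : 2 ≤ h) :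
    ∃ c : ℝ, 0 < c ∧ ∃ N : ℕ, ∀ n : ℕ, N ≤ n →
      ∃ A : Finset ℤ, ↑A ⊆ Set.Icc (1 : ℤ) n ∧ IsWeakChgSet h g ↑A ∧
        c * (n : ℝ) ^ ((1 - (1 : ℝ) / h) * (1 - (1 : ℝ) / g)
              * (1 + 1 / ((h : ℝ) * g - 1))) ≤ (A.card : ℝ) := by
  have hg : 2 ≤ g := hh.trans hgh
  set m := h * g
  have hm : 4 ≤ m := Nat.mul_le_mul hh hg
  set K : ℕ := (2 ^ (m + 1) * 3 ^ (g - 1) * m !)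
  set α : ℝ := (((h - 1) * (g - 1) : ℕ) : ℝ) / ((m - 1 : ℕ) : ℝ)
  rw [weakChg_exponent_eq hh (by omega)]
  have hα : 0 < α := div_pos (mod_cast Nat.mul_pos (by omega) (by omega)) (mod_cast by omega)
  have hα1 : α ≤ 1 := by
    refine div_le_one_of_le₀ (Nat.cast_le.2 ?_) (by positivity)
    calc (h - 1) * (g - 1) ≤ (h - 1) * g := Nat.mul_le_mul_left _ (Nat.sub_le _ _)
      _ = m - g := Nat.sub_one_mul h g
      _ ≤ m - 1 := by omega
  have hK : 0 < K := by positivity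
  obtain ⟨N, hN⟩ := eventually_atTop.1 (eventually_floor_rpow_div_bounds K m hK hα hα1)
  refine ⟨1 / (4 * K), by positivity, N, fun n hn => ?_⟩
  obtain ⟨hnm, hms, hsn, hxs⟩ := hN n hn
  obtain ⟨A, hAn, hA, hsA⟩ := exists_isWeakChgSet_le_two_mul_card (by omega) (by omega) hnm hms
    hsn (mul_floor_rpow_div_pow_le K n _ _ hK (by omega))
  refine ⟨A, hAn, hA, ?_⟩
  have hsA' : (⌊(n : ℝ) ^ α / K⌋₊ : ℝ) ≤ 2 * #A := by exact_mod_cast hsA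
  calc 1 / (4 * K) * (n : ℝ) ^ α = (n : ℝ) ^ α / (2 * K) / 2 := by field_simp; ring
    _ ≤ #A := by linarith
end

section
/- Let g and h be integers with g ≥ h ≥ 2. Every infinite C_h[g] set A of positive integers satisfies liminf_{x→∞} A(x) / x^{1-1/h} = 0. -/
open Classical in
/-- The counting function `A(x) = |{a ∈ A : a ≤ x}|` of a set of positive integers. -/
noncomputable def countFn (A : Set ℤ) (x : ℕ) : ℕ :=
  ((Finset.Icc (1 : ℤ) x).filter (· ∈ A)).card

/-!
Cut `(0, x]` into blocks of length `D`. Translating an `h`-subset of a block so that its minimum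
is `0` leaves at most `D ^ (h - 1)` possible shapes, and a `C_h[g]` set contains fewer than `g`
translates of any one shape; hence `∑ C(nᵢ, h) ≤ (g - 1) D ^ (h - 1)` over any family of blocks,
where `nᵢ` counts the elements of `A` in block `i`. By convexity, `M` blocks holding `m` elements
contribute at least `(m - h M) ^ h / (M ^ (h - 1) h!)` to that sum.

With `M ≈ m / 2h` this already gives `A(x) ^ h = O(x ^ (h - 1))`. A positive liminf would give
`A(x) ^ h ≥ x ^ (h - 1) / c` for all large `x`; then, for a large base `K`, the upper bound forces
each range `(K ^ j D, K ^ (j + 1) D]` to contain at least half of `A(K ^ (j + 1) D)`, and the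
convexity bound shows that its blocks alone use up `D ^ (h - 1) / (c 4 ^ h h!)` of the budget.
For `D` large compared with `K ^ T`, this holds for `T` ranges at once, which is impossible once
`T > c 4 ^ h h! (g - 1)`.
-/

open Finset
open scoped Nat

lemma sub_pow_le_factorial_mul_choose (n k : ℕ) : (n - k) ^ k ≤ k ! * n.choose k :=
  calc (n - k) ^ k ≤ (n + 1 - k) ^ k := by gcongr; omega
    _ ≤ n.descFactorial k := Nat.pow_sub_le_descFactorial n k
    _ = k ! * n.choose k := Nat.descFactorial_eq_factorial_mul_choose n k

lemma sum_sub_mul_card_le {ι : Type*} (s : Finset ι) (n : ι → ℕ) (k : ℕ) :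
    ∑ i ∈ s, n i - k * #s ≤ ∑ i ∈ s, (n i - k) := by
  rw [tsub_le_iff_right, mul_comm, ← smul_eq_mul, ← sum_const, ← sum_add_distrib]
  exact sum_le_sum fun i _ => le_tsub_add

lemma sub_pow_le_card_pow_mul_sum_choose {ι : Type*} (s : Finset ι) (n : ι → ℕ) {k : ℕ}
    (hk : 0 < k) :
    (∑ i ∈ s, n i - k * #s) ^ k ≤ #s ^ (k - 1) * k ! * ∑ i ∈ s, (n i).choose k := by
  obtain ⟨k, rfl⟩ := Nat.exists_eq_add_one_of_ne_zero hk.ne'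
  rw [add_tsub_cancel_right]
  calc (∑ i ∈ s, n i - (k + 1) * #s) ^ (k + 1) ≤ (∑ i ∈ s, (n i - (k + 1))) ^ (k + 1) := by
        gcongr; exact sum_sub_mul_card_le s n _
    _ ≤ #s ^ k * ∑ i ∈ s, (n i - (k + 1)) ^ (k + 1) :=
        pow_sum_le_card_mul_sum_pow (fun _ _ => Nat.zero_le _) k
    _ ≤ #s ^ k * ∑ i ∈ s, (k + 1)! * (n i).choose (k + 1) := by
        gcongr with i; exact sub_pow_le_factorial_mul_choose _ _
    _ = #s ^ k * (k + 1)! * ∑ i ∈ s, (n i).choose (k + 1) := by rw [← mul_sum, mul_assoc]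

lemma sum_range_sum_Ico {M : Type*} [AddCommMonoid M] (f : ℕ → M) {b : ℕ → ℕ} (hb : Monotone b)
    (n : ℕ) : ∑ j ∈ range n, ∑ i ∈ Ico (b j) (b (j + 1)), f i = ∑ i ∈ Ico (b 0) (b n), f i := by
  induction n with
  | zero => simp
  | succ n ih => rw [sum_range_succ, ih, sum_Ico_consecutive _ (hb n.zero_le) (hb n.le_succ)]

lemma card_le_pow_of_forall_zero_mem {h D : ℕ} (𝓕 : Finset (Finset ℤ))
    (h𝓕 : ∀ P ∈ 𝓕, #P = h ∧ 0 ∈ P ∧ P ⊆ Ico 0 (D : ℤ)) : #𝓕 ≤ D ^ (h - 1) :=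
  calc #𝓕 ≤ #((Ico 0 (D : ℤ)).powersetCard (h - 1)) := by
        refine card_le_card_of_injOn (·.erase 0) (fun P hP => ?_) fun P hP Q hQ hPQ => ?_
        · obtain ⟨hcard, h0, hsub⟩ := h𝓕 P hP
          exact mem_powersetCard.mpr
            ⟨(erase_subset _ _).trans hsub, by rw [card_erase_of_mem h0, hcard]⟩
        · rw [← insert_erase (h𝓕 P hP).2.1, ← insert_erase (h𝓕 Q hQ).2.1]
          exact congrArg _ hPQ
    _ = D.choose (h - 1) := by simp
    _ ≤ D ^ (h - 1) := Nat.choose_le_pow _ _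

open Classical in
noncomputable def countIoc (A : Set ℤ) (u v : ℕ) : ℕ := #{a ∈ Ioc (u : ℤ) v | a ∈ A}

lemma countFn_eq_countIoc (A : Set ℤ) (x : ℕ) : countFn A x = countIoc A 0 x := by
  have : Icc (1 : ℤ) x = Ioc 0 (x : ℤ) := by ext; simp only [mem_Icc, mem_Ioc]; omega
  simp only [countFn, countIoc, this, Nat.cast_zero]

lemma countIoc_le (A : Set ℤ) (u v : ℕ) : countIoc A u v ≤ v - u := by
  classical
  unfold countIoc
  refine (card_filter_le _ _).trans ?_
  rw [Int.card_Ioc]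
  omega

lemma countIoc_add (A : Set ℤ) {u v w : ℕ} (huv : u ≤ v) (hvw : v ≤ w) :
    countIoc A u v + countIoc A v w = countIoc A u w := by
  classical
  unfold countIoc
  rw [← card_union_of_disjoint (disjoint_filter_filter (Ioc_disjoint_Ioc_of_le le_rfl)),
    ← filter_union, Ioc_union_Ioc_eq_Ioc (by exact_mod_cast huv) (by exact_mod_cast hvw)]

lemma countIoc_mul_eq_sum (A : Set ℤ) (D : ℕ) {a b : ℕ} (hab : a ≤ b) :
    countIoc A (a * D) (b * D) = ∑ i ∈ Ico a b, countIoc A (i * D) ((i + 1) * D) := by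
  induction b, hab using Nat.le_induction with
  | base => simp [countIoc]
  | succ b hab ih =>
    rw [sum_Ico_succ_top hab, ← ih, countIoc_add A (by gcongr) (by gcongr; omega)]

lemma countIoc_sub_pow_le (A : Set ℤ) (D : ℕ) {a b h : ℕ} (hh : 0 < h) (hab : a ≤ b) :
    (countIoc A (a * D) (b * D) - h * (b - a)) ^ h ≤
      (b - a) ^ (h - 1) * h ! * ∑ i ∈ Ico a b, (countIoc A (i * D) ((i + 1) * D)).choose h := by
  rw [countIoc_mul_eq_sum A D hab, ← Nat.card_Ico a b]
  exact sub_pow_le_card_pow_mul_sum_choose _ _ hh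

lemma countIoc_le_two_mul_countIoc {A : Set ℤ} {h c C y z : ℕ} (hh : 0 < h) (hc : 0 < c)
    (hyz : y ≤ z) (hup : countIoc A 0 y ^ h ≤ C * y ^ (h - 1))
    (hlow : z ^ (h - 1) ≤ c * countIoc A 0 z ^ h)
    (hCyz : c * 2 ^ h * C * y ^ (h - 1) ≤ z ^ (h - 1)) :
    countIoc A 0 z ≤ 2 * countIoc A y z := by
  have h2 : 2 * countIoc A 0 y ≤ countIoc A 0 z := by
    refine (Nat.pow_le_pow_iff_left hh.ne').mp (Nat.le_of_mul_le_mul_left ?_ hc)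
    calc c * (2 * countIoc A 0 y) ^ h = c * 2 ^ h * countIoc A 0 y ^ h := by ring
      _ ≤ c * 2 ^ h * (C * y ^ (h - 1)) := by gcongr
      _ ≤ c * countIoc A 0 z ^ h := by linarith
  have := countIoc_add A (Nat.zero_le y) hyz
  omega

lemma pow_le_mul_sum_choose_countIoc {A : Set ℤ} {h c a b D : ℕ} (hh : 0 < h) (hc : 0 < c)
    (hb : 0 < b) (hab : a ≤ b) (hhalf : countIoc A 0 (b * D) ≤ 2 * countIoc A (a * D) (b * D))
    (hlow : (b * D) ^ (h - 1) ≤ c * countIoc A 0 (b * D) ^ h)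
    (hD : c * (4 * h) ^ h * b ≤ D ^ (h - 1)) :
    D ^ (h - 1) ≤
      c * 4 ^ h * h ! * ∑ i ∈ Ico a b, (countIoc A (i * D) ((i + 1) * D)).choose h := by
  set n := countIoc A 0 (b * D)
  set m := countIoc A (a * D) (b * D)
  set S := ∑ i ∈ Ico a b, (countIoc A (i * D) ((i + 1) * D)).choose h
  have hn : 4 * h * b ≤ n := by
    refine (Nat.pow_le_pow_iff_left hh.ne').mp (Nat.le_of_mul_le_mul_left ?_ hc)
    calc c * (4 * h * b) ^ h = c * (4 * h) ^ h * b * b ^ (h - 1) := by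
          rw [mul_pow, ← pow_sub_one_mul hh.ne' b]; ring
      _ ≤ D ^ (h - 1) * b ^ (h - 1) := by gcongr
      _ = (b * D) ^ (h - 1) := by rw [mul_pow, mul_comm]
      _ ≤ c * n ^ h := hlow
  have hnm : n ≤ 4 * (m - h * (b - a)) := by
    have : h * (b - a) ≤ h * b := by gcongr; omega
    rw [mul_assoc] at hn
    omega
  refine Nat.le_of_mul_le_mul_left ?_ (pow_pos hb (h - 1))
  calc b ^ (h - 1) * D ^ (h - 1) = (b * D) ^ (h - 1) := (mul_pow _ _ _).symm
    _ ≤ c * n ^ h := hlow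
    _ ≤ c * (4 ^ h * (m - h * (b - a)) ^ h) := by rw [← mul_pow]; gcongr
    _ ≤ c * (4 ^ h * ((b - a) ^ (h - 1) * h ! * S)) := by
        gcongr; exact countIoc_sub_pow_le A D hh hab
    _ ≤ c * (4 ^ h * (b ^ (h - 1) * h ! * S)) := by gcongr; omega
    _ = b ^ (h - 1) * (c * 4 ^ h * h ! * S) := by ring

namespace IsChgSet

variable {h g : ℕ} {A : Set ℤ}

lemma card_lt_of_forall_add_mem (hA : IsChgSet h g A) {X T : Finset ℤ} (hX : #X = h)
    (hT : ∀ t ∈ T, ∀ x ∈ X, x + t ∈ A) : #T < g := by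
  by_contra! hgT
  obtain ⟨T', hT'T, hT'⟩ := exists_subset_card_eq hgT
  exact hA ⟨X, fun i => T'.orderEmbOfFin hT' i, hX, (T'.orderEmbOfFin hT').injective,
    fun i x hx => hT _ (hT'T (T'.orderEmbOfFin_mem hT' i)) x hx⟩

lemma card_filter_eq_image_add_lt (hA : IsChgSet h g A) {S : Finset (Finset ℤ)}
    (hSA : ∀ s ∈ S, ↑s ⊆ A) {P : Finset ℤ} (hP : #P = h) (μ : Finset ℤ → ℤ) :
    #{s ∈ S | s = P.image (· + μ s)} < g := by
  set F := {s ∈ S | s = P.image (· + μ s)}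
  have hF : ∀ s ∈ F, s ∈ S ∧ s = P.image (· + μ s) := fun s hs => mem_filter.mp hs
  rw [← card_image_of_injOn (f := μ) fun s hs t ht hst => by
    rw [(hF s hs).2, (hF t ht).2, hst]]
  refine hA.card_lt_of_forall_add_mem hP fun t ht x hx => ?_
  obtain ⟨s, hs, rfl⟩ := mem_image.mp ht
  have hxs : x + μ s ∈ P.image (· + μ s) := mem_image_of_mem _ hx
  rw [← (hF s hs).2] at hxs
  exact hSA s (hF s hs).1 hxs

lemma card_le_of_forall_subset_Ioc (hA : IsChgSet h g A) (hh : 0 < h) {D : ℕ}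
    (S : Finset (Finset ℤ)) (hS : ∀ s ∈ S, #s = h ∧ ↑s ⊆ A ∧ ∃ a, s ⊆ Ioc a (a + D)) :
    #S ≤ (g - 1) * D ^ (h - 1) := by
  set μ : Finset ℤ → ℤ := fun s => s.min.untopD 0
  set σ : Finset ℤ → Finset ℤ := fun s => s.image (· - μ s)
  have hμ : ∀ s ∈ S, μ s ∈ s ∧ ∀ x ∈ s, μ s ≤ x := by
    intro s hs
    have hne : s.Nonempty := card_pos.mp (by rw [(hS s hs).1]; exact hh)
    have : μ s = s.min' hne := by simp only [μ, ← coe_min' hne, WithTop.untopD_coe]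
    rw [this]
    exact ⟨min'_mem s hne, fun x hx => min'_le s x hx⟩
  have hσ : ∀ s, (σ s).image (· + μ s) = s := fun s => by
    simp [σ, image_image, Function.comp_def]
  have hσcard : ∀ s ∈ S, #(σ s) = h := fun s hs => by
    rw [card_image_of_injective _ sub_left_injective, (hS s hs).1]
  calc #S ≤ (g - 1) * #(S.image σ) := by
        refine card_le_mul_card_image S _ fun P hP => ?_
        obtain ⟨s, hs, rfl⟩ := mem_image.mp hP
        refine Nat.le_sub_one_of_lt <| (card_le_card fun t ht => ?_).trans_lt
          (hA.card_filter_eq_image_add_lt (fun s hs => (hS s hs).2.1) (hσcard s hs) μ)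
        obtain ⟨htS, hts⟩ := mem_filter.mp ht
        exact mem_filter.mpr ⟨htS, by rw [← hts, hσ]⟩
    _ ≤ (g - 1) * D ^ (h - 1) := by
        gcongr
        refine card_le_pow_of_forall_zero_mem _ fun P hP => ?_
        obtain ⟨s, hs, rfl⟩ := mem_image.mp hP
        obtain ⟨-, -, a, hsa⟩ := hS s hs
        obtain ⟨hμs, hμle⟩ := hμ s hs
        refine ⟨hσcard s hs, mem_image.mpr ⟨μ s, hμs, sub_self _⟩, fun x hx => ?_⟩
        obtain ⟨z, hz, rfl⟩ := mem_image.mp hx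
        have := mem_Ioc.mp (hsa hz)
        have := mem_Ioc.mp (hsa hμs)
        have := hμle z hz
        rw [mem_Ico]
        omega

lemma sum_choose_countIoc_le (hA : IsChgSet h g A) (hh : 0 < h) (D : ℕ) (I : Finset ℕ) :
    ∑ i ∈ I, (countIoc A (i * D) ((i + 1) * D)).choose h ≤ (g - 1) * D ^ (h - 1) := by
  classical
  set E : ℕ → Finset ℤ := fun i => {a ∈ Ioc ((i * D : ℕ) : ℤ) ((i + 1) * D : ℕ) | a ∈ A}
  have hE : ∀ {i j}, i < j → Disjoint (E i) (E j) := fun hij =>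
    disjoint_filter_filter <| Ioc_disjoint_Ioc_of_le <| by gcongr; exact hij
  have hdisj : (I : Set ℕ).PairwiseDisjoint fun i => (E i).powersetCard h := by
    intro i _ j _ hij
    refine disjoint_left.mpr fun s hsi hsj => ?_
    obtain ⟨hsi, hcard⟩ := mem_powersetCard.mp hsi
    obtain ⟨x, hx⟩ := card_pos.mp (hcard ▸ hh : 0 < #s)
    have hxj := (mem_powersetCard.mp hsj).1 hx
    rcases Nat.lt_or_gt_of_ne hij with hlt | hlt
    · exact disjoint_left.mp (hE hlt) (hsi hx) hxj
    · exact disjoint_left.mp (hE hlt) hxj (hsi hx)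
  calc ∑ i ∈ I, (countIoc A (i * D) ((i + 1) * D)).choose h
      = #(I.biUnion fun i => (E i).powersetCard h) := by
        rw [card_biUnion hdisj]
        simp only [card_powersetCard, E, countIoc]
    _ ≤ (g - 1) * D ^ (h - 1) := by
        refine hA.card_le_of_forall_subset_Ioc hh _ fun s hs => ?_
        obtain ⟨i, -, hs⟩ := mem_biUnion.mp hs
        obtain ⟨hsE, hcard⟩ := mem_powersetCard.mp hs
        refine ⟨hcard, fun x hx => (mem_filter.mp (hsE hx)).2, (i * D : ℕ), fun x hx => ?_⟩
        have := mem_Ioc.mp (mem_filter.mp (hsE hx)).1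
        rw [mem_Ioc]
        push_cast at this ⊢
        constructor <;> linarith

lemma countIoc_pow_le (hA : IsChgSet h g A) (hh : 0 < h) (x : ℕ) :
    countIoc A 0 x ^ h ≤ ((2 * h) ^ h + 4 ^ h * h ! * (g - 1)) * x ^ (h - 1) := by
  set m := countIoc A 0 x
  have hmx : m ≤ x := by simpa using countIoc_le A 0 x
  rcases Nat.eq_zero_or_pos m with hm0 | hm0
  · simp [hm0, zero_pow hh.ne']
  have hx : 1 ≤ x ^ (h - 1) := Nat.one_le_pow _ _ (hm0.trans_le hmx)
  rcases lt_or_ge m (2 * h) with hm | hm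
  · calc m ^ h ≤ (2 * h) ^ h := by gcongr
      _ ≤ (2 * h) ^ h + 4 ^ h * h ! * (g - 1) := Nat.le_add_right _ _
      _ ≤ _ := Nat.le_mul_of_pos_right _ hx
  set M := m / (2 * h)
  set D := x / M + 1
  have hM : 0 < M := Nat.div_pos hm (by omega)
  have hxMD : x ≤ M * D := (Nat.lt_mul_div_succ x hM).le
  have hMD : M * D ≤ 2 * x := by
    have := Nat.mul_div_le x M
    have := Nat.div_le_self m (2 * h)
    rw [mul_add, mul_one]
    omega
  have h2hM : 2 * h * M ≤ m := Nat.mul_div_le m (2 * h)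
  have hm' : m ≤ 2 * (countIoc A 0 (M * D) - h * M) := by
    have := countIoc_add A (Nat.zero_le x) hxMD
    rw [mul_assoc] at h2hM
    omega
  have hscale := countIoc_sub_pow_le A D hh (Nat.zero_le M)
  simp only [zero_mul, Nat.sub_zero] at hscale
  calc m ^ h ≤ 2 ^ h * (countIoc A 0 (M * D) - h * M) ^ h := by rw [← mul_pow]; gcongr
    _ ≤ 2 ^ h * (M ^ (h - 1) * h ! * ((g - 1) * D ^ (h - 1))) := by
        gcongr
        exact hscale.trans (by gcongr; exact hA.sum_choose_countIoc_le hh D _)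
    _ = 2 ^ h * h ! * (g - 1) * (M * D) ^ (h - 1) := by rw [mul_pow]; ring
    _ ≤ 2 ^ h * h ! * (g - 1) * (2 ^ (h - 1) * x ^ (h - 1)) := by rw [← mul_pow]; gcongr
    _ ≤ 2 ^ h * h ! * (g - 1) * (2 ^ h * x ^ (h - 1)) := by gcongr <;> omega
    _ = 4 ^ h * h ! * (g - 1) * x ^ (h - 1) := by
        rw [show (4 : ℕ) = 2 * 2 by rfl, mul_pow]; ring
    _ ≤ _ := by gcongr; exact Nat.le_add_left _ _

lemma pow_le_mul_sum_choose_countIoc_Ico_pow (hA : IsChgSet h g A) (hh : 2 ≤ h)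
    {c x₀ K D j : ℕ} (hc : 0 < c) (hlow : ∀ x ≥ x₀, x ^ (h - 1) ≤ c * countIoc A 0 x ^ h)
    (hK : c * 2 ^ h * ((2 * h) ^ h + 4 ^ h * h ! * (g - 1)) < K) (hx₀ : x₀ ≤ D)
    (hD : c * (4 * h) ^ h * K ^ (j + 1) ≤ D) :
    D ^ (h - 1) ≤ c * 4 ^ h * h ! *
      ∑ i ∈ Ico (K ^ j) (K ^ (j + 1)), (countIoc A (i * D) ((i + 1) * D)).choose h := by
  have hK0 : 0 < K := by omega
  have hlowj : (K ^ (j + 1) * D) ^ (h - 1) ≤ c * countIoc A 0 (K ^ (j + 1) * D) ^ h :=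
    hlow _ (hx₀.trans (Nat.le_mul_of_pos_left _ (by positivity)))
  refine pow_le_mul_sum_choose_countIoc (by omega) hc (by positivity)
    (Nat.pow_le_pow_right hK0 j.le_succ) ?_ hlowj ?_
  · refine countIoc_le_two_mul_countIoc (by omega) hc (by gcongr; omega)
      (hA.countIoc_pow_le (by omega) _) hlowj ?_
    calc c * 2 ^ h * _ * (K ^ j * D) ^ (h - 1) ≤ K ^ (h - 1) * (K ^ j * D) ^ (h - 1) := by
          gcongr; exact hK.le.trans (Nat.le_self_pow (by omega) K)
      _ = (K ^ (j + 1) * D) ^ (h - 1) := by rw [← mul_pow, ← mul_assoc, ← pow_succ']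
  · exact hD.trans (Nat.le_self_pow (by omega) D)

lemma frequently_mul_countIoc_pow_lt (hA : IsChgSet h g A) (hh : 2 ≤ h) {c : ℕ} (hc : 0 < c) :
    ∃ᶠ x in Filter.atTop, c * countIoc A 0 x ^ h < x ^ (h - 1) := by
  rw [Filter.frequently_atTop]
  intro x₀
  by_contra! hlow
  set K := c * 2 ^ h * ((2 * h) ^ h + 4 ^ h * h ! * (g - 1)) + 1
  set T := c * 4 ^ h * h ! * (g - 1) + 1
  set D := x₀ + c * (4 * h) ^ h * K ^ T
  set S : ℕ → ℕ := fun i => (countIoc A (i * D) ((i + 1) * D)).choose h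
  have hK : 0 < K := by omega
  have hscale (j : ℕ) (hj : j < T) :
      D ^ (h - 1) ≤ c * 4 ^ h * h ! * ∑ i ∈ Ico (K ^ j) (K ^ (j + 1)), S i :=
    hA.pow_le_mul_sum_choose_countIoc_Ico_pow hh hc hlow (by omega) (Nat.le_add_right _ _) <|
      calc c * (4 * h) ^ h * K ^ (j + 1) ≤ c * (4 * h) ^ h * K ^ T := by gcongr; exact hj
        _ ≤ D := Nat.le_add_left _ _
  have := calc T * D ^ (h - 1) = ∑ j ∈ range T, D ^ (h - 1) := by simp
    _ ≤ ∑ j ∈ range T, c * 4 ^ h * h ! * ∑ i ∈ Ico (K ^ j) (K ^ (j + 1)), S i :=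
        sum_le_sum fun j hj => hscale j (mem_range.mp hj)
    _ = c * 4 ^ h * h ! * ∑ i ∈ Ico 1 (K ^ T), S i := by
        rw [← mul_sum, sum_range_sum_Ico S (fun _ _ => Nat.pow_le_pow_right hK), pow_zero]
    _ ≤ c * 4 ^ h * h ! * ((g - 1) * D ^ (h - 1)) := by
        gcongr; exact hA.sum_choose_countIoc_le (by omega) D _
  rw [← mul_assoc] at this
  have := Nat.le_of_mul_le_mul_right this (by positivity)
  omega

end IsChgSet

lemma div_rpow_one_sub_inv_lt {a x ε : ℝ} {h : ℕ} (hh : 0 < h) (hx : 0 < x)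
    (hε : 0 < ε) (hlt : a ^ h < ε ^ h * x ^ (h - 1)) : a / x ^ (1 - 1 / (h : ℝ)) < ε := by
  have hpow : (ε * x ^ (1 - 1 / (h : ℝ))) ^ h = ε ^ h * x ^ (h - 1) := by
    rw [mul_pow, ← Real.rpow_natCast (x ^ _), ← Real.rpow_mul hx.le, ← Real.rpow_natCast x,
      Nat.cast_pred hh]
    congr 2
    field_simp
  rw [div_lt_iff₀ (by positivity)]
  exact lt_of_pow_lt_pow_left₀ h (by positivity) (hpow ▸ hlt)

lemma Filter.liminf_eq_zero_of_frequently_le {ι : Type*} {l : Filter ι} {u : ι → ℝ}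
    (hu : ∀ x, 0 ≤ u x) (hfreq : ∀ ε > 0, ∃ᶠ x in l, u x ≤ ε) : Filter.liminf u l = 0 := by
  apply le_antisymm
  · refine le_of_forall_pos_le_add fun ε hε => ?_
    rw [zero_add]
    exact Filter.liminf_le_of_frequently_le (hfreq ε hε) (Filter.isBoundedUnder_of ⟨0, hu⟩)
  · exact Filter.le_liminf_of_le (Filter.IsCoboundedUnder.of_frequently_le (hfreq 1 one_pos))
      (Filter.Eventually.of_forall hu)

lemma IsChgSet.frequently_countFn_div_rpow_le {h g : ℕ} {A : Set ℤ} (hA : IsChgSet h g A)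
    (hh : 2 ≤ h) {ε : ℝ} (hε : 0 < ε) :
    ∃ᶠ x : ℕ in Filter.atTop, (countFn A x : ℝ) / (x : ℝ) ^ (1 - 1 / (h : ℝ)) ≤ ε := by
  obtain ⟨c, hc⟩ := exists_nat_gt (ε ^ h)⁻¹
  have hεc : 1 < ε ^ h * c := by rwa [inv_lt_iff_one_lt_mul₀' (by positivity)] at hc
  have hc0 : 0 < c := by exact_mod_cast (by positivity : (0 : ℝ) < (ε ^ h)⁻¹).trans hc
  refine (hA.frequently_mul_countIoc_pow_lt hh hc0).mono fun x hx => ?_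
  have hx0 : 0 < x := Nat.pos_of_ne_zero <| by rintro rfl; rw [zero_pow (by omega)] at hx; omega
  have hxR : (c : ℝ) * (countIoc A 0 x : ℝ) ^ h < (x : ℝ) ^ (h - 1) := by exact_mod_cast hx
  refine (div_rpow_one_sub_inv_lt (by omega) (by positivity) hε ?_).le
  rw [countFn_eq_countIoc]
  calc (countIoc A 0 x : ℝ) ^ h ≤ ε ^ h * c * (countIoc A 0 x : ℝ) ^ h :=
        le_mul_of_one_le_left (by positivity) hεc.le
    _ < ε ^ h * (x : ℝ) ^ (h - 1) := by rw [mul_assoc]; gcongr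

theorem stmt3_general (g h : ℕ) (hh : 2 ≤ h)
    (A : Set ℤ) (hA : IsChgSet h g A) :
    Filter.liminf (fun x : ℕ => (countFn A x : ℝ) / (x : ℝ) ^ (1 - (1 : ℝ) / h))
      Filter.atTop = 0 :=
  Filter.liminf_eq_zero_of_frequently_le (fun _ => by positivity)
    fun _ hε => hA.frequently_countFn_div_rpow_le hh hε

/-- `liminf_{x→∞} A(x)/x^{1-1/h} = 0` for any infinite `C_h[g]` set of positive integers. -/
theorem stmt3 (g h : ℕ) (hgh : h ≤ g) (hh : 2 ≤ h)
    (A : Set ℤ) (hpos : ∀ a ∈ A, 0 < a) (hinf : A.Infinite) (hA : IsChgSet h g A) :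
    Filter.liminf (fun x : ℕ => (countFn A x : ℝ) / (x : ℝ) ^ (1 - (1 : ℝ) / h))
      Filter.atTop = 0 :=
  stmt3_general g h hh A hA
end

section
/- Let g and h be integers with g ≥ h ≥ 2. Let A be a finite nonempty C_h[g] set of integers and let B be a finite set of integers with |B| ≥ h. Then |A|^{h/(h-1)} ≤ |A + B| · ( (g-1)^{1/(h-1)} + (h-1)|A|^{1/(h-1)} / |B| ), where A + B = {a + b : a ∈ A, b ∈ B} is the sumset. -/
open Pointwise

/-!
Let `r(x)` count the representations `x = a + b` with `a ∈ A`, `b ∈ B`. For an `h`-subset `T ⊆ B`,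
the `x` with `x - T ⊆ A` are distinct shifts placing `-T` inside `A`, so there are fewer than `g`
of them; double counting gives `∑ C(r(x), h) ≤ (g - 1) C(|B|, h)`. With `a(x) = (r(x) - (h-1))₊`
one has `r a^(h-1) ≤ h! C(r, h)`, hence `∑ r a^(h-1) ≤ (g - 1) |B|^h`. Chebyshev's sum inequality
and the power mean inequality turn this into `|A| |B| (∑ a)^(h-1) ≤ |A+B|^(h-1) (g - 1) |B|^h`,
and `∑ a ≥ |A| |B| - (h-1) |A+B|`; taking `(h-1)`-th roots gives the bound.
-/

open Finset

namespace Finset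

variable {α : Type*} [AddCommGroup α] [DecidableEq α]

def reprCount (A B : Finset α) (x : α) : ℕ := #{b ∈ B | x - b ∈ A}

lemma card_filter_sub_mem_add (A B : Finset α) {b : α} (hb : b ∈ B) :
    #{x ∈ A + B | x - b ∈ A} = #A := by
  have : {x ∈ A + B | x - b ∈ A} = A.map (addRightEmbedding b) := by
    ext x
    simp only [mem_filter, mem_map, addRightEmbedding_apply]
    constructor
    · rintro ⟨-, hx⟩
      exact ⟨x - b, hx, sub_add_cancel x b⟩
    · rintro ⟨a, ha, rfl⟩
      exact ⟨add_mem_add ha hb, by rwa [add_sub_cancel_right]⟩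
  rw [this, card_map]

lemma sum_reprCount (A B : Finset α) : ∑ x ∈ A + B, reprCount A B x = #A * #B := by
  calc ∑ x ∈ A + B, reprCount A B x
      = ∑ b ∈ B, #{x ∈ A + B | x - b ∈ A} :=
        sum_card_bipartiteAbove_eq_sum_card_bipartiteBelow (fun x b => x - b ∈ A)
    _ = #A * #B := by
        rw [sum_congr rfl fun b hb => card_filter_sub_mem_add A B hb, sum_const, smul_eq_mul,
          mul_comm]

lemma choose_reprCount (A B : Finset α) (x : α) (h : ℕ) :
    (reprCount A B x).choose h = #{T ∈ B.powersetCard h | ∀ b ∈ T, x - b ∈ A} := by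
  rw [reprCount, ← card_powersetCard]
  congr 1
  ext T
  simp only [mem_powersetCard, mem_filter, subset_iff]
  grind

end Finset

lemma Nat.mul_sub_pow_le_descFactorial (r k : ℕ) : r * (r - k) ^ k ≤ r.descFactorial (k + 1) := by
  cases r with
  | zero => simp
  | succ r =>
    rw [Nat.succ_descFactorial_succ]
    exact Nat.mul_le_mul_left _ (Nat.pow_sub_le_descFactorial r k)

lemma MonovaryOn.sum_mul_pow_sum_le_card_pow_mul_sum {ι α : Type*} [Semiring α] [LinearOrder α]
    [IsStrictOrderedRing α] [ExistsAddOfLE α] {s : Finset ι} {f g : ι → α}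
    (hfg : MonovaryOn f g s) (hf : ∀ i ∈ s, 0 ≤ f i) (hg : ∀ i ∈ s, 0 ≤ g i) :
    ∀ n : ℕ, (∑ i ∈ s, f i) * (∑ i ∈ s, g i) ^ n ≤ (#s : α) ^ n * ∑ i ∈ s, f i * g i ^ n
  | 0 => by simp
  | n + 1 =>
    calc (∑ i ∈ s, f i) * (∑ i ∈ s, g i) ^ (n + 1)
        ≤ (∑ i ∈ s, f i) * ((#s : α) ^ n * ∑ i ∈ s, g i ^ (n + 1)) :=
          mul_le_mul_of_nonneg_left (pow_sum_le_card_mul_sum_pow hg n) (sum_nonneg hf)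
      _ = (#s : α) ^ n * ((∑ i ∈ s, f i) * ∑ i ∈ s, g i ^ (n + 1)) :=
          ((Nat.cast_commute _ _).pow_left n).symm.left_comm _
      _ ≤ (#s : α) ^ n * (#s * ∑ i ∈ s, f i * g i ^ (n + 1)) :=
          mul_le_mul_of_nonneg_left (hfg.pow_right₀ hg (n + 1)).sum_mul_sum_le_card_mul_sum
            (by positivity)
      _ = (#s : α) ^ (n + 1) * ∑ i ∈ s, f i * g i ^ (n + 1) := by rw [pow_succ, mul_assoc]

section ChgSet

variable {h g : ℕ} {A : Finset ℤ}

lemma IsChgSet.card_filter_lt (hA : IsChgSet h g ↑A) (S : Finset ℤ) {T : Finset ℤ}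
    (hT : #T = h) : #{x ∈ S | ∀ b ∈ T, x - b ∈ A} < g := by
  by_contra! hle
  obtain ⟨G, hGS, hG⟩ := exists_subset_card_eq hle
  refine hA ⟨-T, fun i => G.orderEmbOfFin hG i, by rw [card_neg, hT],
    (G.orderEmbOfFin hG).injective, fun i x hx => ?_⟩
  obtain ⟨b, hb, rfl⟩ := mem_neg.mp hx
  simpa [neg_add_eq_sub] using (mem_filter.mp (hGS (G.orderEmbOfFin_mem hG i))).2 b hb

lemma IsChgSet.pos (hA : IsChgSet h g ↑A) : 0 < g :=
  (Nat.zero_le _).trans_lt <| hA.card_filter_lt ∅ (T := (range h).map Nat.castEmbedding)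
    (by rw [card_map, card_range])

lemma IsChgSet.sum_choose_reprCount_le (hA : IsChgSet h g ↑A) (B : Finset ℤ) :
    ∑ x ∈ A + B, (reprCount A B x).choose h ≤ (g - 1) * (#B).choose h := by
  calc ∑ x ∈ A + B, (reprCount A B x).choose h
      = ∑ T ∈ B.powersetCard h, #{x ∈ A + B | ∀ b ∈ T, x - b ∈ A} := by
        simp_rw [choose_reprCount]
        exact sum_card_bipartiteAbove_eq_sum_card_bipartiteBelow (fun x T => ∀ b ∈ T, x - b ∈ A)
    _ ≤ ∑ _T ∈ B.powersetCard h, (g - 1) :=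
        sum_le_sum fun T hT =>
          Nat.le_sub_one_of_lt (hA.card_filter_lt _ (mem_powersetCard.mp hT).2)
    _ = (g - 1) * (#B).choose h := by rw [sum_const, card_powersetCard, smul_eq_mul, mul_comm]

lemma IsChgSet.sum_reprCount_mul_pow_le {k : ℕ} (hA : IsChgSet (k + 1) g ↑A) (B : Finset ℤ) :
    ∑ x ∈ A + B, reprCount A B x * (reprCount A B x - k) ^ k ≤ (g - 1) * #B ^ (k + 1) := by
  calc ∑ x ∈ A + B, reprCount A B x * (reprCount A B x - k) ^ k
      ≤ ∑ x ∈ A + B, (reprCount A B x).descFactorial (k + 1) :=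
        sum_le_sum fun x _ => Nat.mul_sub_pow_le_descFactorial _ k
    _ = (k + 1).factorial * ∑ x ∈ A + B, (reprCount A B x).choose (k + 1) := by
        simp_rw [Nat.descFactorial_eq_factorial_mul_choose, mul_sum]
    _ ≤ (k + 1).factorial * ((g - 1) * (#B).choose (k + 1)) :=
        Nat.mul_le_mul_left _ (hA.sum_choose_reprCount_le B)
    _ = (g - 1) * (#B).descFactorial (k + 1) := by
        rw [Nat.descFactorial_eq_factorial_mul_choose]; ring
    _ ≤ (g - 1) * #B ^ (k + 1) := Nat.mul_le_mul_left _ (Nat.descFactorial_le_pow _ _)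

lemma IsChgSet.card_mul_pow_le {k : ℕ} (hA : IsChgSet (k + 1) g ↑A) {B : Finset ℤ}
    (hB : B.Nonempty) :
    #A * (∑ x ∈ A + B, (reprCount A B x - k)) ^ k ≤ (g - 1) * (#(A + B) * #B) ^ k := by
  have hmono : MonovaryOn (reprCount A B) (fun x => reprCount A B x - k) ↑(A + B) :=
    fun _ _ _ _ hlt => (lt_of_tsub_lt_tsub_right hlt).le
  refine Nat.le_of_mul_le_mul_right ?_ hB.card_pos
  calc #A * (∑ x ∈ A + B, (reprCount A B x - k)) ^ k * #B
      = (∑ x ∈ A + B, reprCount A B x) * (∑ x ∈ A + B, (reprCount A B x - k)) ^ k := by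
        rw [sum_reprCount]; ring
    _ ≤ #(A + B) ^ k * ∑ x ∈ A + B, reprCount A B x * (reprCount A B x - k) ^ k :=
        hmono.sum_mul_pow_sum_le_card_pow_mul_sum (fun _ _ => Nat.zero_le _)
          (fun _ _ => Nat.zero_le _) k
    _ ≤ #(A + B) ^ k * ((g - 1) * #B ^ (k + 1)) :=
        Nat.mul_le_mul_left _ (hA.sum_reprCount_mul_pow_le B)
    _ = (g - 1) * (#(A + B) * #B) ^ k * #B := by ring

end ChgSet

lemma Real.rpow_succ_div_le_of_mul_pow_le {k : ℕ} (hk : k ≠ 0) {n D s m G : ℝ} (hn : 0 ≤ n)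
    (hs : 0 ≤ s) (hm : 0 < m) (hG : 0 ≤ G) (hpow : n * D ^ k ≤ G * (s * m) ^ k)
    (hsum : n * m ≤ D + s * k) :
    n ^ (((k : ℝ) + 1) / k) ≤ s * (G ^ (1 / (k : ℝ)) + k * n ^ (1 / (k : ℝ)) / m) := by
  set u := n ^ (1 / (k : ℝ))
  set c := G ^ (1 / (k : ℝ))
  have hu : 0 ≤ u := rpow_nonneg hn _
  have hroot : u * D ≤ c * (s * m) := by
    refine le_of_pow_le_pow_left₀ hk (by positivity) ?_
    have hu_pow : u ^ k = n := by simp only [u, one_div]; exact rpow_inv_natCast_pow hn hk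
    have hc_pow : c ^ k = G := by simp only [c, one_div]; exact rpow_inv_natCast_pow hG hk
    rwa [mul_pow, mul_pow, hu_pow, hc_pow]
  have hsplit : n ^ (((k : ℝ) + 1) / k) = n * u := by
    rw [add_div, div_self (Nat.cast_ne_zero.mpr hk), add_comm, rpow_add' hn (by positivity),
      rpow_one, mul_comm]
  have hcleared : n * u * m ≤ s * c * m + k * s * u := by
    linarith [mul_le_mul_of_nonneg_right hsum hu]
  rw [hsplit]
  calc n * u ≤ (s * c * m + k * s * u) / m := (le_div_iff₀ hm).mpr hcleared
    _ = s * (c + k * u / m) := by field_simp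

theorem stmt8_general (g h : ℕ) (hh : 2 ≤ h)
    (A B : Finset ℤ) (hChg : IsChgSet h g ↑A) (hB : h ≤ B.card) :
    (A.card : ℝ) ^ ((h : ℝ) / ((h : ℝ) - 1)) ≤
      ((A + B).card : ℝ) *
        (((g : ℝ) - 1) ^ ((1 : ℝ) / ((h : ℝ) - 1)) +
          ((h : ℝ) - 1) * (A.card : ℝ) ^ ((1 : ℝ) / ((h : ℝ) - 1)) / (B.card : ℝ)) := by
  obtain ⟨k, rfl⟩ : ∃ k, h = k + 1 := ⟨h - 1, by omega⟩
  have hBne : B.Nonempty := card_pos.mp (by omega)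
  have hpow := hChg.card_mul_pow_le hBne
  set D := ∑ x ∈ A + B, (reprCount A B x - k)
  have hsum : #A * #B ≤ D + #(A + B) * k := by
    rw [← sum_reprCount, ← smul_eq_mul, ← sum_const, ← sum_add_distrib]
    exact sum_le_sum fun _ _ => le_tsub_add
  push_cast
  simp only [add_sub_cancel_right]
  refine Real.rpow_succ_div_le_of_mul_pow_le (D := D) (by omega) (Nat.cast_nonneg _)
    (Nat.cast_nonneg _) (by exact_mod_cast hBne.card_pos)
    (sub_nonneg.mpr (by exact_mod_cast hChg.pos)) ?_ (by exact_mod_cast hsum)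
  rw [← Nat.cast_pred hChg.pos]
  exact_mod_cast hpow

theorem stmt8 (g h : ℕ) (hgh : h ≤ g) (hh : 2 ≤ h)
    (A B : Finset ℤ) (hA : A.Nonempty) (hChg : IsChgSet h g ↑A) (hB : h ≤ B.card) :
    (A.card : ℝ) ^ ((h : ℝ) / ((h : ℝ) - 1)) ≤
      ((A + B).card : ℝ) *
        (((g : ℝ) - 1) ^ ((1 : ℝ) / ((h : ℝ) - 1)) +
          ((h : ℝ) - 1) * (A.card : ℝ) ^ ((1 : ℝ) / ((h : ℝ) - 1)) / (B.card : ℝ)) :=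
  stmt8_general g h hh A B hChg hB
end

section
/- Let g and h be integers with g ≥ h ≥ 2 and let S be a finite set of integers. Then the set S \ S_bad obtained by deleting from S all its (h,g)-bad elements is a weak-C_h[g] set. -/
/-- `m` is `(h,g)`-bad for `S`: there are integers `m_1 < ⋯ < m_{g-1} < m` (described here by
a strictly monotone `M : Fin g → ℤ` with largest value `m`) and `0 < ℓ_1 < ⋯ < ℓ_{h-1}`
(described by a strictly monotone `L : Fin h → ℤ` with smallest value `0`) such that the `gh`
sums `M i + L j` are pairwise distinct elements of `S`. -/
def IsBad (h g : ℕ) (S : Finset ℤ) (m : ℤ) : Prop :=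
  ∃ (M : Fin g → ℤ) (L : Fin h → ℤ),
    StrictMono M ∧ StrictMono L ∧
    (∀ i, M i ≤ m) ∧ (∃ i, M i = m) ∧
    (∀ j, 0 ≤ L j) ∧ (∃ j, L j = 0) ∧
    Function.Injective (fun p : Fin g × Fin h => M p.1 + L p.2) ∧
    ∀ (i : Fin g) (j : Fin h), M i + L j ∈ S

open Classical in
/-- The set of `(h,g)`-bad elements of `S`. -/
noncomputable def badSet (h g : ℕ) (S : Finset ℤ) : Finset ℤ :=
  S.filter (fun m => IsBad h g S m)

/-- Deleting from `S` all its `(h,g)`-bad elements yields a weak-`C_h[g]` set. -/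
theorem stmt9 (g h : ℕ) (hgh : h ≤ g) (hh : 2 ≤ h) (S : Finset ℤ) :
    IsWeakChgSet h g ↑(S \ badSet h g S) := by
  rintro ⟨X, k, hXcard, hkinj, hdisj, hmem⟩
  have hX0 : X.Nonempty := Finset.card_pos.mp (by omega)
  set x₀ := X.min' hX0 with hx0
  set K : Finset ℤ := Finset.image k Finset.univ with hK
  have hKcard : K.card = g := by
    rw [hK, Finset.card_image_of_injective _ hkinj, Finset.card_univ, Fintype.card_fin]
  have hK0 : K.Nonempty := Finset.card_pos.mp (by omega)
  have hKmem : ∀ a ∈ K, ∃ s, k s = a := by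
    intro a ha; simpa [hK] using ha
  set eX := X.orderIsoOfFin hXcard with heX
  set eK := K.orderIsoOfFin hKcard with heK
  set M : Fin g → ℤ := fun i => (eK i : ℤ) + x₀ with hM
  set L : Fin h → ℤ := fun j => (eX j : ℤ) - x₀ with hL
  have hsum : ∀ i j, M i + L j = (eK i : ℤ) + (eX j : ℤ) := by
    intro i j; simp only [hM, hL]; ring
  have hdistinct : ∀ (s s' : Fin g) (x x' : ℤ), x ∈ X → x' ∈ X →
      x + k s = x' + k s' → s = s' ∧ x = x' := by
    intro s s' x x' hx hx' heq
    rcases eq_or_ne s s' with rfl | hne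
    · exact ⟨rfl, by omega⟩
    · exfalso
      have h1 : x + k s ∈ X.image (· + k s) := Finset.mem_image_of_mem _ hx
      have h2 : x + k s ∈ X.image (· + k s') := heq ▸ Finset.mem_image_of_mem _ hx'
      exact Finset.disjoint_left.mp (hdisj s s' hne) h1 h2
  set m : ℤ := K.max' hK0 + x₀ with hm
  have hmemS : ∀ (i : Fin g) (j : Fin h), M i + L j ∈ S := by
    intro i j
    obtain ⟨s, hs⟩ := hKmem _ (eK i).2
    have := hmem s (eX j) (eX j).2
    rw [Finset.mem_coe, Finset.mem_sdiff] at this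
    have h2 : (eX j : ℤ) + k s ∈ S := this.1
    rw [hsum, ← hs, add_comm]
    exact h2
  have hbad : IsBad h g S m := by
    refine ⟨M, L, ?_, ?_, ?_, ?_, ?_, ?_, ?_, hmemS⟩
    · intro i i' hii
      have := eK.strictMono hii
      simp only [hM]
      have : (eK i : ℤ) < (eK i' : ℤ) := this
      omega
    · intro j j' hjj
      have : (eX j : ℤ) < (eX j' : ℤ) := eX.strictMono hjj
      simp only [hL]; omega
    · intro i
      have : (eK i : ℤ) ≤ K.max' hK0 := K.le_max' _ (eK i).2
      simp only [hM, hm]; omega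
    · obtain ⟨i, hi⟩ := eK.surjective ⟨K.max' hK0, K.max'_mem hK0⟩
      exact ⟨i, by simp [hM, hm, hi]⟩
    · intro j
      have : x₀ ≤ (eX j : ℤ) := X.min'_le _ (eX j).2
      simp only [hL]; omega
    · obtain ⟨j, hj⟩ := eX.surjective ⟨x₀, X.min'_mem hX0⟩
      exact ⟨j, by simp [hL, hj]⟩
    · rintro ⟨i, j⟩ ⟨i', j'⟩ heq
      simp only at heq
      rw [hsum, hsum] at heq
      obtain ⟨s, hs⟩ := hKmem _ (eK i).2
      obtain ⟨s', hs'⟩ := hKmem _ (eK i').2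
      have heq' : (eX j : ℤ) + k s = (eX j' : ℤ) + k s' := by rw [hs, hs']; linarith
      obtain ⟨hss, hxx⟩ := hdistinct s s' _ _ (eX j).2 (eX j').2 heq'
      have hi : (eK i : ℤ) = (eK i' : ℤ) := by rw [← hs, ← hs', hss]
      have : i = i' := eK.injective (Subtype.ext hi)
      have : j = j' := eX.injective (Subtype.ext hxx)
      simp_all
  -- m itself is in S \ badSet, contradiction
  obtain ⟨s, hs⟩ := hKmem _ (K.max'_mem hK0)
  have hmm := hmem s x₀ (X.min'_mem hX0)
  rw [Finset.mem_coe, Finset.mem_sdiff] at hmm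
  have hmeq : x₀ + k s = m := by rw [hs, hm]; ring
  have hmS : m ∈ S := hmeq ▸ hmm.1
  have : m ∈ badSet h g S := by
    simp only [badSet, Finset.mem_filter]
    exact ⟨hmS, hbad⟩
  exact hmm.2 (hmeq ▸ this)
end

section
/- Let g and h be integers with g ≥ h ≥ 2 and for a positive integer n set p = p(n) = (1/2) n^{-(g+h-2)/(gh-1)} (equivalently, p is the positive real satisfying 2pn = n^{g+h-1}(2p)^{gh}). Then for all sufficiently large n there exists a set S ⊆ {1,…,n} such that |S| ≥ np/2 and |S_bad| ≤ np/4. -/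
open Finset

section BernoulliWeight

variable {α : Type*}

/-- The probability that a `p`-random subset of `A` equals `S`. -/
noncomputable def bernoulliWeight (p : ℝ) (A S : Finset α) : ℝ :=
  p ^ #S * (1 - p) ^ (#A - #S)

lemma bernoulliWeight_pos {p : ℝ} (hp0 : 0 < p) (hp1 : p < 1) (A S : Finset α) :
    0 < bernoulliWeight p A S := by
  have : 0 < 1 - p := by linarith
  unfold bernoulliWeight
  positivity

lemma sum_bernoulliWeight (p : ℝ) (A : Finset α) :
    ∑ S ∈ A.powerset, bernoulliWeight p A S = 1 := by
  simp [bernoulliWeight, sum_pow_mul_eq_add_pow]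

lemma sum_bernoulliWeight_Icc [DecidableEq α] (p : ℝ) {A T : Finset α} (hT : T ⊆ A) :
    ∑ S ∈ Icc T A, bernoulliWeight p A S = p ^ #T := by
  have hdisj : ∀ R ∈ (A \ T).powerset, Disjoint T R := fun R hR =>
    disjoint_of_subset_right (mem_powerset.mp hR) disjoint_sdiff
  rw [Icc_eq_image_powerset hT, sum_image fun R hR R' hR' hRR' => by
    rw [← union_sdiff_cancel_left (hdisj R hR), hRR', union_sdiff_cancel_left (hdisj R' hR')]]
  calc ∑ R ∈ (A \ T).powerset, bernoulliWeight p A (T ∪ R)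
      = ∑ R ∈ (A \ T).powerset, p ^ #T * bernoulliWeight p (A \ T) R := by
        refine sum_congr rfl fun R hR => ?_
        have hRA := card_le_card (mem_powerset.mp hR)
        rw [card_sdiff_of_subset hT] at hRA
        have hTA := card_le_card hT
        rw [bernoulliWeight, bernoulliWeight, card_union_of_disjoint (hdisj R hR),
          card_sdiff_of_subset hT, pow_add, mul_assoc]
        congr 3
        omega
    _ = p ^ #T := by rw [← mul_sum, sum_bernoulliWeight, mul_one]

lemma sum_bernoulliWeight_mul_card_filter_subset [DecidableEq α] {β : Type*} (p : ℝ)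
    (A : Finset α) (Q : Finset β) (G : β → Finset α) (hG : ∀ q ∈ Q, G q ⊆ A) :
    ∑ S ∈ A.powerset, bernoulliWeight p A S * #{q ∈ Q | G q ⊆ S} = ∑ q ∈ Q, p ^ #(G q) := by
  calc ∑ S ∈ A.powerset, bernoulliWeight p A S * #{q ∈ Q | G q ⊆ S}
      = ∑ q ∈ Q, ∑ S ∈ A.powerset, if G q ⊆ S then bernoulliWeight p A S else 0 := by
        simp_rw [card_filter, Nat.cast_sum, mul_sum]
        rw [sum_comm]
        simp
    _ = ∑ q ∈ Q, p ^ #(G q) := by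
        refine sum_congr rfl fun q hq => ?_
        rw [← sum_filter, ← Icc_eq_filter_powerset, sum_bernoulliWeight_Icc p (hG q hq)]

lemma sum_bernoulliWeight_mul_card [DecidableEq α] (p : ℝ) (A : Finset α) :
    ∑ S ∈ A.powerset, bernoulliWeight p A S * #S = p * #A := by
  have h := sum_bernoulliWeight_mul_card_filter_subset p A A singleton
    (fun x hx => singleton_subset_iff.mpr hx)
  simp only [card_singleton, pow_one, sum_const, nsmul_eq_mul, singleton_subset_iff] at h
  rw [mul_comm, ← h]
  refine sum_congr rfl fun S hS => ?_
  rw [filter_mem_eq_inter, inter_eq_right.mpr (mem_powerset.mp hS)]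

lemma exists_le_of_le_sum_bernoulliWeight_mul {p c : ℝ} (hp0 : 0 < p) (hp1 : p < 1)
    {A : Finset α} {f : Finset α → ℝ} (h : c ≤ ∑ S ∈ A.powerset, bernoulliWeight p A S * f S) :
    ∃ S ⊆ A, c ≤ f S := by
  by_contra! hlt
  have : ∑ S ∈ A.powerset, bernoulliWeight p A S * f S
      < ∑ S ∈ A.powerset, bernoulliWeight p A S * c :=
    sum_lt_sum_of_nonempty (powerset_nonempty A) fun S hS =>
      mul_lt_mul_of_pos_left (hlt S (mem_powerset.mp hS)) (bernoulliWeight_pos hp0 hp1 A S)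
  rw [← sum_mul, sum_bernoulliWeight, one_mul] at this
  linarith

end BernoulliWeight

lemma IsBad.mono {h g : ℕ} {S T : Finset ℤ} {m : ℤ} (hST : S ⊆ T) (hm : IsBad h g S m) :
    IsBad h g T m := by
  obtain ⟨M, L, hM, hL, hMm, hmax, hL0, hzero, hinj, hmem⟩ := hm
  exact ⟨M, L, hM, hL, hMm, hmax, hL0, hzero, hinj, fun i j => hST (hmem i j)⟩

lemma mem_badSet {h g : ℕ} {S : Finset ℤ} {m : ℤ} :
    m ∈ badSet h g S ↔ m ∈ S ∧ IsBad h g S m := by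
  classical
  simp [badSet]

lemma badSet_subset (h g : ℕ) (S : Finset ℤ) : badSet h g S ⊆ S :=
  fun _ hm => (mem_badSet.mp hm).1

lemma badSet_sdiff_badSet (h g : ℕ) (S : Finset ℤ) : badSet h g (S \ badSet h g S) = ∅ := by
  refine eq_empty_of_forall_notMem fun m hm => ?_
  obtain ⟨hmS, hbad⟩ := mem_badSet.mp hm
  exact (mem_sdiff.mp hmS).2 (mem_badSet.mpr ⟨(mem_sdiff.mp hmS).1, hbad.mono sdiff_subset⟩)

section Witnesses

def grid {g h : ℕ} (M : Fin g → ℤ) (L : Fin h → ℤ) : Finset ℤ :=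
  univ.image fun ij : Fin g × Fin h => M ij.1 + L ij.2

/-- The pairs `(M, L)` with `M i ∈ [1, n]`, `L 0 = 0` and `L j ∈ [0, n)` for `j ≠ 0`. -/
noncomputable def witnessBox (n g k : ℕ) : Finset ((Fin g → ℤ) × (Fin (k + 1) → ℤ)) :=
  Fintype.piFinset (fun _ => Icc 1 (n : ℤ)) ×ˢ
    Fintype.piFinset (Matrix.vecCons {0} fun _ => Icc 0 ((n : ℤ) - 1))

lemma card_witnessBox (n g k : ℕ) : #(witnessBox n g k) = n ^ g * n ^ k := by
  simp [witnessBox, Fin.prod_univ_succ]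

open Classical in
noncomputable def witnesses (n g k : ℕ) : Finset ((Fin g → ℤ) × (Fin (k + 1) → ℤ)) :=
  {q ∈ witnessBox n g k |
    Function.Injective (fun ij : Fin g × Fin (k + 1) => q.1 ij.1 + q.2 ij.2) ∧
      grid q.1 q.2 ⊆ Icc 1 (n : ℤ)}

lemma card_witnesses_le (n g k : ℕ) : #(witnesses n g k) ≤ n ^ g * n ^ k :=
  (card_le_card (filter_subset _ _)).trans (card_witnessBox n g k).le

lemma card_grid_of_mem_witnesses {n g k : ℕ} {q : (Fin g → ℤ) × (Fin (k + 1) → ℤ)}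
    (hq : q ∈ witnesses n g k) : #(grid q.1 q.2) = g * (k + 1) := by
  rw [grid, card_image_of_injective _ (mem_filter.mp hq).2.1]
  simp

/-- A bad element `m` is the largest value of `M` for any of its witnesses `(M, L)`, so distinct
bad elements have distinct witnesses. -/
lemma card_badSet_le {n g k : ℕ} {S : Finset ℤ} (hS : S ⊆ Icc 1 (n : ℤ)) :
    #(badSet (k + 1) g S) ≤ #{q ∈ witnesses n g k | grid q.1 q.2 ⊆ S} := by
  refine card_le_card_of_forall_subsingleton
    (fun m q => (∀ i, q.1 i ≤ m) ∧ ∃ i, q.1 i = m) (fun m hm => ?_) fun q _ m₁ hm₁ m₂ hm₂ => ?_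
  · obtain ⟨M, L, -, hL, hMm, ⟨i₀, hi₀⟩, hLnonneg, ⟨j₀, hj₀⟩, hinj, hmem⟩ := (mem_badSet.mp hm).2
    have hLzero : L 0 = 0 := le_antisymm (hj₀ ▸ hL.monotone (Fin.zero_le j₀)) (hLnonneg 0)
    have hgrid : grid M L ⊆ S := by
      simp only [grid, image_subset_iff, mem_univ, forall_const, Prod.forall]
      exact hmem
    have hsum : ∀ i j, M i + L j ∈ Icc 1 (n : ℤ) := fun i j => hS (hmem i j)
    refine ⟨(M, L), ?_, hMm, i₀, hi₀⟩
    simp only [witnesses, witnessBox, mem_filter, mem_product, Fintype.mem_piFinset]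
    refine ⟨⟨⟨fun i => by simpa [hLzero] using hsum i 0, fun j => ?_⟩, hinj, hgrid.trans hS⟩,
      hgrid⟩
    refine Fin.cases (by simp [hLzero]) (fun j => ?_) j
    have := mem_Icc.mp (hsum i₀ j.succ)
    have := mem_Icc.mp (hsum i₀ 0)
    simp only [Matrix.cons_val_succ, mem_Icc]
    constructor <;> linarith [hLnonneg j.succ]
  · obtain ⟨⟨hle₁, i₁, rfl⟩, hle₂, i₂, rfl⟩ := And.intro hm₁.2 hm₂.2
    exact le_antisymm (hle₂ i₁) (hle₁ i₂)

lemma sum_bernoulliWeight_mul_card_badSet_le {p : ℝ} (hp0 : 0 < p) (hp1 : p < 1) (n g k : ℕ) :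
    ∑ S ∈ (Icc 1 (n : ℤ)).powerset,
        bernoulliWeight p (Icc 1 (n : ℤ)) S * #(badSet (k + 1) g S)
      ≤ (n : ℝ) ^ g * (n : ℝ) ^ k * p ^ (g * (k + 1)) := by
  calc ∑ S ∈ (Icc 1 (n : ℤ)).powerset,
        bernoulliWeight p (Icc 1 (n : ℤ)) S * #(badSet (k + 1) g S)
      ≤ ∑ S ∈ (Icc 1 (n : ℤ)).powerset,
        bernoulliWeight p (Icc 1 (n : ℤ)) S * #{q ∈ witnesses n g k | grid q.1 q.2 ⊆ S} := by
        gcongr with S hS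
        · exact (bernoulliWeight_pos hp0 hp1 _ _).le
        · exact card_badSet_le (mem_powerset.mp hS)
    _ = ∑ q ∈ witnesses n g k, p ^ #(grid q.1 q.2) :=
        sum_bernoulliWeight_mul_card_filter_subset p _ _ _ fun _ hq => (mem_filter.mp hq).2.2
    _ = #(witnesses n g k) * p ^ (g * (k + 1)) := by
        rw [sum_congr rfl fun q hq => by rw [card_grid_of_mem_witnesses hq], sum_const,
          nsmul_eq_mul]
    _ ≤ (n : ℝ) ^ g * (n : ℝ) ^ k * p ^ (g * (k + 1)) := by
        gcongr
        exact_mod_cast card_witnesses_le n g k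

end Witnesses

lemma exists_subset_Icc_le_card_and_badSet_eq_empty {p : ℝ} (hp0 : 0 < p) (hp1 : p < 1)
    (n g k : ℕ) (hbound : (n : ℝ) ^ g * (n : ℝ) ^ k * p ^ (g * (k + 1)) ≤ n * p / 2) :
    ∃ S ⊆ Icc 1 (n : ℤ), n * p / 2 ≤ #S ∧ badSet (k + 1) g S = ∅ := by
  set A := Icc 1 (n : ℤ)
  have hA : (#A : ℝ) = n := by simp [A]
  have hexp : n * p / 2 ≤
      ∑ S ∈ A.powerset, bernoulliWeight p A S * ((#S : ℝ) - #(badSet (k + 1) g S)) := by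
    simp only [mul_sub, sum_sub_distrib, sum_bernoulliWeight_mul_card, hA]
    linarith [sum_bernoulliWeight_mul_card_badSet_le hp0 hp1 n g k]
  obtain ⟨S, hSA, hS⟩ := exists_le_of_le_sum_bernoulliWeight_mul hp0 hp1 hexp
  refine ⟨S \ badSet (k + 1) g S, sdiff_subset.trans hSA, ?_, badSet_sdiff_badSet _ _ S⟩
  rwa [card_sdiff_of_subset (badSet_subset _ _ S),
    Nat.cast_sub (card_le_card (badSet_subset _ _ S))]

/-- For `2p = x ^ (-e)` this is the identity `x ^ a * (2p) ^ b = 2px` that determines `p`. -/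
lemma pow_mul_rpow_neg_pow {x e : ℝ} (hx : 0 < x) {a b : ℕ} (he : e * (b - 1) = a - 1) :
    x ^ a * (x ^ (-e)) ^ b = x * x ^ (-e) := by
  have hrhs : x * x ^ (-e) = x ^ (1 + -e) := by rw [Real.rpow_add hx, Real.rpow_one]
  rw [hrhs, ← Real.rpow_natCast, ← Real.rpow_natCast, ← Real.rpow_mul hx.le, ← Real.rpow_add hx]
  congr 1
  linarith

lemma pow_mul_half_mul_rpow_neg_pow_le {x e : ℝ} (hx : 0 < x) {a b : ℕ} (hb : 2 ≤ b)
    (he : e * (b - 1) = a - 1) :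
    x ^ a * (1 / 2 * x ^ (-e)) ^ b ≤ x * (1 / 2 * x ^ (-e)) / 2 := by
  have hhalf : (1 / 2 : ℝ) ^ b ≤ 1 / 4 :=
    (pow_le_pow_of_le_one (by norm_num) (by norm_num) hb).trans_eq (by norm_num)
  calc x ^ a * (1 / 2 * x ^ (-e)) ^ b = (1 / 2) ^ b * (x * x ^ (-e)) := by
        rw [mul_pow, ← pow_mul_rpow_neg_pow hx he]; ring
    _ ≤ 1 / 4 * (x * x ^ (-e)) := by gcongr
    _ = x * (1 / 2 * x ^ (-e)) / 2 := by ring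

/-- With `p = p(n) = (1/2) n^{-(g+h-2)/(gh-1)}`, for all sufficiently large `n` there is a
set `S ⊆ {1, …, n}` with `|S| ≥ np/2` and `|S_bad| ≤ np/4`. -/
theorem stmt10 (g h : ℕ) (hgh : h ≤ g) (hh : 2 ≤ h)
    (p : ℕ → ℝ)
    (hp : ∀ n : ℕ, p n =
      (1 / 2) * (n : ℝ) ^ (-(((g : ℝ) + (h : ℝ) - 2) / ((g : ℝ) * (h : ℝ) - 1)))) :
    ∃ N : ℕ, ∀ n : ℕ, N ≤ n →
      ∃ S : Finset ℤ, ↑S ⊆ Set.Icc (1 : ℤ) n ∧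
        (n : ℝ) * p n / 2 ≤ (S.card : ℝ) ∧
        ((badSet h g S).card : ℝ) ≤ (n : ℝ) * p n / 4 := by
  obtain ⟨k, rfl⟩ : ∃ k, h = k + 1 := ⟨h - 1, by omega⟩
  refine ⟨1, fun n hn => ?_⟩
  set e := ((g : ℝ) + ((k + 1 : ℕ) : ℝ) - 2) / ((g : ℝ) * ((k + 1 : ℕ) : ℝ) - 1) with he
  have hn0 : (0 : ℝ) < n := by exact_mod_cast hn
  have hg : (2 : ℝ) ≤ g := by exact_mod_cast hh.trans hgh
  have hden : 0 < (g : ℝ) * ((k + 1 : ℕ) : ℝ) - 1 := by push_cast; nlinarith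
  have hpn : 0 < p n := by rw [hp n]; positivity
  have hpn1 : p n < 1 := by
    rw [hp n]
    have : (n : ℝ) ^ (-e) ≤ 1 :=
      Real.rpow_le_one_of_one_le_of_nonpos (by exact_mod_cast hn) (by
        rw [neg_nonpos, he]; exact div_nonneg (by push_cast; linarith) hden.le)
    linarith
  have hbound : (n : ℝ) ^ g * (n : ℝ) ^ k * p n ^ (g * (k + 1)) ≤ n * p n / 2 := by
    rw [hp n, ← pow_add]
    refine pow_mul_half_mul_rpow_neg_pow_le hn0 (by nlinarith) ?_
    have := hden.ne'
    rw [he]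
    push_cast at this ⊢
    field_simp
    ring
  obtain ⟨S, hS, hcard, hbad⟩ :=
    exists_subset_Icc_le_card_and_badSet_eq_empty hpn hpn1 n g k hbound
  refine ⟨S, fun x hx => by simpa using hS hx, hcard, ?_⟩
  rw [hbad, card_empty, Nat.cast_zero]
  positivity
end

section
/- Let g and h be integers with g ≥ h ≥ 2. There exists a constant C = C(g,h) > 0 such that for every positive integer N and every C_h[g] set A ⊆ [0, N²], writing A_ν = |A ∩ [(ν-1)N, νN]| for ν = 1,…,N, one has Σ_{ν=1}^{N} A_ν^h ≤ C · N^{h-1}. -/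
/-!
Normalise every `h`-element subset `X` of a block by translating its least element to `0`. The
normalised set contains `0` and lies in `[0, N]`, so there are at most `C(N, h-1) ≤ N^(h-1)`
possible shapes. Two different blocks share at most one point, so the `h`-subsets of different
blocks are different sets, and those with a common shape are distinct translates of it inside `A`;
the `C_h[g]` property allows at most `g - 1` of them. Hence `∑ C(A_ν, h) ≤ (g-1) N^(h-1)`, and
`a^h ≤ 2^h h! C(a, h) + (2h)^h` turns this into the bound on `∑ A_ν^h`.
-/

open Finset
open scoped Nat

theorem Nat.pow_le_two_pow_mul_factorial_mul_choose_add (a h : ℕ) :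
    a ^ h ≤ 2 ^ h * h ! * a.choose h + (2 * h) ^ h := by
  rcases le_or_gt a (2 * h) with hle | hlt
  · exact le_add_of_le_right (Nat.pow_le_pow_left hle h)
  · refine le_add_of_le_left ?_
    calc a ^ h ≤ (2 * (a + 1 - h)) ^ h := Nat.pow_le_pow_left (by omega) h
      _ = 2 ^ h * (a + 1 - h) ^ h := mul_pow ..
      _ ≤ 2 ^ h * a.descFactorial h := Nat.mul_le_mul_left _ (a.pow_sub_le_descFactorial h)
      _ = 2 ^ h * h ! * a.choose h := by rw [descFactorial_eq_factorial_mul_choose, mul_assoc]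

namespace Finset

/-- The translate of `X` whose least element is `0` (the empty set for `X = ∅`). -/
def shape (X : Finset ℤ) : Finset ℤ := X.image (· - X.min.untopD 0)

variable {X : Finset ℤ}

lemma min_untopD_eq_min' (hX : X.Nonempty) : X.min.untopD 0 = X.min' hX := by
  rw [← coe_min' hX, WithTop.untopD_coe]

lemma image_shape_add_min (X : Finset ℤ) : X.shape.image (· + X.min.untopD 0) = X := by
  ext x
  simp [shape, image_image]

lemma card_shape (X : Finset ℤ) : X.shape.card = X.card :=
  card_image_of_injective _ sub_left_injective

lemma zero_mem_shape (hX : X.Nonempty) : 0 ∈ X.shape :=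
  mem_image.2 ⟨_, by rw [min_untopD_eq_min' hX]; exact min'_mem X hX, sub_self _⟩

lemma shape_subset_Icc {N : ℕ} (hX : X.Nonempty) (hdiam : ∀ x ∈ X, ∀ y ∈ X, x - y ≤ N) :
    X.shape ⊆ Icc 0 (N : ℤ) := by
  intro z hz
  obtain ⟨x, hx, rfl⟩ := mem_image.1 hz
  rw [min_untopD_eq_min' hX, mem_Icc]
  exact ⟨sub_nonneg.2 (min'_le X x hx), hdiam x hx _ (min'_mem X hX)⟩

lemma shape_mem_image_insert_zero {N : ℕ} (hX : X.Nonempty)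
    (hdiam : ∀ x ∈ X, ∀ y ∈ X, x - y ≤ N) :
    X.shape ∈ ((Icc 1 (N : ℤ)).powersetCard (X.card - 1)).image (insert 0) := by
  refine mem_image.2 ⟨X.shape.erase 0, mem_powersetCard.2 ⟨fun z hz => ?_, ?_⟩,
    insert_erase (zero_mem_shape hX)⟩
  · have := mem_Icc.1 (shape_subset_Icc hX hdiam (mem_of_mem_erase hz))
    have := ne_of_mem_erase hz
    rw [mem_Icc]
    omega
  · rw [card_erase_of_mem (zero_mem_shape hX), card_shape]

end Finset

theorem card_image_insert_zero_powersetCard_le (N k : ℕ) :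
    (((Icc 1 (N : ℤ)).powersetCard k).image (insert 0)).card ≤ N.choose k := by
  refine card_image_le.trans_eq ?_
  rw [card_powersetCard, Int.card_Icc]
  simp

namespace IsChgSet

variable {h g : ℕ} {A : Set ℤ}

theorem card_lt (hA : IsChgSet h g A) {Y K : Finset ℤ} (hY : Y.card = h)
    (hK : ∀ k ∈ K, ∀ y ∈ Y, y + k ∈ A) : K.card < g := by
  by_contra! hg
  exact hA ⟨Y, fun i => K.orderEmbOfFin rfl (Fin.castLE hg i), hY,
    (K.orderEmbOfFin rfl).injective.comp (Fin.castLE_injective hg),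
    fun i y hy => hK _ (K.orderEmbOfFin_mem rfl _) y hy⟩

/-- Sets in a fibre of `shape` are translates of one set, distinguished by their least elements,
so a fibre with `g` members would exhibit `g` translates inside `A`. -/
theorem card_le_of_forall_sub_le (hA : IsChgSet h g A) (hh : 0 < h) {N : ℕ}
    {P : Finset (Finset ℤ)} (hPA : ∀ X ∈ P, ↑X ⊆ A) (hPcard : ∀ X ∈ P, X.card = h)
    (hPdiam : ∀ X ∈ P, ∀ x ∈ X, ∀ y ∈ X, x - y ≤ N) :
    P.card ≤ (g - 1) * N.choose (h - 1) := by
  have hne : ∀ X ∈ P, X.Nonempty := fun X hX => card_pos.1 (hPcard X hX ▸ hh)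
  have hfibre : ∀ Y ∈ P.image shape, {X ∈ P | X.shape = Y}.card ≤ g - 1 := by
    intro Y hY
    obtain ⟨X₀, hX₀, rfl⟩ := mem_image.1 hY
    set F := P.filter (·.shape = X₀.shape)
    have htranslate : ∀ X ∈ F, X₀.shape.image (· + X.min.untopD 0) = X := by
      intro X hX
      rw [← (mem_filter.1 hX).2, image_shape_add_min]
    have hinj : Set.InjOn (fun X : Finset ℤ => X.min.untopD 0) F :=
      fun X hX X' hX' hXX' => by
        rw [← htranslate X hX, ← htranslate X' hX']
        exact congrArg (fun m => X₀.shape.image (· + m)) hXX'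
    rw [← card_image_of_injOn hinj]
    refine Nat.le_sub_one_of_lt (hA.card_lt ((card_shape X₀).trans (hPcard X₀ hX₀)) ?_)
    rintro _ hk y hy
    obtain ⟨X, hX, rfl⟩ := mem_image.1 hk
    have hyX := mem_image_of_mem (· + X.min.untopD 0) hy
    rw [htranslate X hX] at hyX
    exact hPA X (mem_filter.1 hX).1 hyX
  calc P.card ≤ (g - 1) * (P.image shape).card := card_le_mul_card_image P (g - 1) hfibre
    _ ≤ (g - 1) * N.choose (h - 1) := by
      refine Nat.mul_le_mul_left _ ((card_le_card fun Y hY => ?_).trans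
        (card_image_insert_zero_powersetCard_le N (h - 1)))
      obtain ⟨X, hX, rfl⟩ := mem_image.1 hY
      simpa [hPcard X hX] using shape_mem_image_insert_zero (hne X hX) (hPdiam X hX)

end IsChgSet

/-- The `ν`-th block `A ∩ [(ν - 1)N, νN]`, whose size is the paper's `A_ν`. -/
noncomputable def block (A : Finset ℤ) (N ν : ℕ) : Finset ℤ :=
  A ∩ Icc (((ν : ℤ) - 1) * N) ((ν : ℤ) * N)

lemma sub_le_of_mem_block {A : Finset ℤ} {N ν : ℕ} {x y : ℤ} (hx : x ∈ block A N ν)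
    (hy : y ∈ block A N ν) : x - y ≤ N := by
  have hx := mem_Icc.1 (mem_inter.1 hx).2
  have hy := mem_Icc.1 (mem_inter.1 hy).2
  linarith

/-- Distinct blocks meet in at most one point. -/
lemma eq_of_subset_block {A X : Finset ℤ} {N ν μ : ℕ} (hX : 1 < X.card)
    (hν : X ⊆ block A N ν) (hμ : X ⊆ block A N μ) : ν = μ := by
  obtain ⟨a, ha, b, hb, hab⟩ := one_lt_card.1 hX
  by_contra hνμ
  wlog hlt : ν < μ generalizing ν μ
  · exact this hμ hν (Ne.symm hνμ) (by omega)
  have hsep : (ν : ℤ) * N ≤ ((μ : ℤ) - 1) * N :=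
    mul_le_mul_of_nonneg_right (by omega) (Nat.cast_nonneg N)
  have ha₁ := mem_Icc.1 (mem_inter.1 (hν ha)).2
  have ha₂ := mem_Icc.1 (mem_inter.1 (hμ ha)).2
  have hb₁ := mem_Icc.1 (mem_inter.1 (hν hb)).2
  have hb₂ := mem_Icc.1 (mem_inter.1 (hμ hb)).2
  omega

namespace IsChgSet

variable {h g : ℕ} {A : Finset ℤ}

theorem sum_choose_card_block_le (hA : IsChgSet h g ↑A) (hh : 2 ≤ h) (N : ℕ) (s : Finset ℕ) :
    ∑ ν ∈ s, (block A N ν).card.choose h ≤ (g - 1) * N ^ (h - 1) := by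
  have hdisj : (s : Set ℕ).PairwiseDisjoint fun ν => (block A N ν).powersetCard h := by
    intro ν _ μ _ hνμ
    refine disjoint_left.2 fun X hXν hXμ => hνμ ?_
    rw [mem_powersetCard] at hXν hXμ
    exact eq_of_subset_block (by omega) hXν.1 hXμ.1
  have hmem : ∀ X ∈ s.biUnion fun ν => (block A N ν).powersetCard h,
      ∃ ν, X ⊆ block A N ν ∧ X.card = h := fun X hX => by
    obtain ⟨ν, -, hXν⟩ := mem_biUnion.1 hX
    exact ⟨ν, mem_powersetCard.1 hXν⟩
  simp_rw [← card_powersetCard, ← card_biUnion hdisj]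
  refine (hA.card_le_of_forall_sub_le (by omega) (fun X hX x hx => ?_)
    (fun X hX => (hmem X hX).choose_spec.2) (fun X hX x hx y hy => ?_)).trans
    (Nat.mul_le_mul_left _ (N.choose_le_pow _))
  · obtain ⟨ν, hXν, -⟩ := hmem X hX
    exact mem_of_mem_inter_left (hXν hx)
  · obtain ⟨ν, hXν, -⟩ := hmem X hX
    exact sub_le_of_mem_block (hXν hx) (hXν hy)

theorem sum_pow_card_block_le (hA : IsChgSet h g ↑A) (hh : 2 ≤ h) (N : ℕ) :
    ∑ ν ∈ Icc 1 N, (block A N ν).card ^ h ≤ (2 ^ h * h ! * (g - 1) + (2 * h) ^ h) * N ^ (h - 1) :=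
  calc ∑ ν ∈ Icc 1 N, (block A N ν).card ^ h
      ≤ ∑ ν ∈ Icc 1 N, (2 ^ h * h ! * (block A N ν).card.choose h + (2 * h) ^ h) :=
        sum_le_sum fun ν _ => Nat.pow_le_two_pow_mul_factorial_mul_choose_add _ h
    _ = 2 ^ h * h ! * ∑ ν ∈ Icc 1 N, (block A N ν).card.choose h + N * (2 * h) ^ h := by
        rw [sum_add_distrib, ← mul_sum, sum_const, Nat.card_Icc, smul_eq_mul, Nat.add_sub_cancel]
    _ ≤ 2 ^ h * h ! * ((g - 1) * N ^ (h - 1)) + N ^ (h - 1) * (2 * h) ^ h := by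
        gcongr
        · exact hA.sum_choose_card_block_le hh N _
        · exact Nat.le_self_pow (by omega) N
    _ = (2 ^ h * h ! * (g - 1) + (2 * h) ^ h) * N ^ (h - 1) := by ring

end IsChgSet

theorem stmt13_general (g h : ℕ) (hh : 2 ≤ h) :
    ∃ C : ℝ, 0 < C ∧ ∀ N : ℕ, 0 < N → ∀ A : Finset ℤ,
      ↑A ⊆ Set.Icc (0 : ℤ) ((N : ℤ) ^ 2) → IsChgSet h g ↑A →
      ∑ ν ∈ Finset.Icc 1 N,
          ((A ∩ Finset.Icc (((ν : ℤ) - 1) * N) ((ν : ℤ) * N)).card : ℝ) ^ h ≤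
        C * (N : ℝ) ^ (h - 1) := by
  have hC : 0 < 2 ^ h * h ! * (g - 1) + (2 * h) ^ h := by
    have := pow_pos (show 0 < 2 * h by omega) h
    omega
  refine ⟨_, Nat.cast_pos.2 hC, fun N _ A _ hA => ?_⟩
  exact_mod_cast hA.sum_pow_card_block_le hh N

theorem stmt13 (g h : ℕ) (hgh : h ≤ g) (hh : 2 ≤ h) :
    ∃ C : ℝ, 0 < C ∧ ∀ N : ℕ, 0 < N → ∀ A : Finset ℤ,
      ↑A ⊆ Set.Icc (0 : ℤ) ((N : ℤ) ^ 2) → IsChgSet h g ↑A →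
      ∑ ν ∈ Finset.Icc 1 N,
          ((A ∩ Finset.Icc (((ν : ℤ) - 1) * N) ((ν : ℤ) * N)).card : ℝ) ^ h ≤
        C * (N : ℝ) ^ (h - 1) :=
  stmt13_general g h hh
end

section
/- Let g and h be integers with g ≥ h ≥ 2. There exists a constant C = C(g,h) > 0 such that for every positive integer n and every C_h[g] set A ⊆ {1,…,n}, we have |A| ≤ C · n^{1 - 1/h}. -/
open Finset

theorem IsChgSet.card_lt_s14 {h g : ℕ} {A : Set ℤ} (hA : IsChgSet h g A) {X K : Finset ℤ}
    (hX : X.card = h) (hK : ∀ k ∈ K, ∀ x ∈ X, x + k ∈ A) : K.card < g := by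
  by_contra! hg
  exact hA ⟨X, fun i => K.orderEmbOfFin rfl (Fin.castLE hg i), hX,
    fun i j hij => Fin.castLE_injective hg ((K.orderEmbOfFin rfl).injective hij),
    fun i => hK _ (K.orderEmbOfFin_mem rfl _)⟩

def minOrZero (S : Finset ℤ) : ℤ := if hS : S.Nonempty then S.min' hS else 0

theorem minOrZero_mem {S : Finset ℤ} (hS : S.Nonempty) : minOrZero S ∈ S := by
  simpa only [minOrZero, dif_pos hS] using S.min'_mem hS

theorem minOrZero_le {S : Finset ℤ} {y : ℤ} (hy : y ∈ S) : minOrZero S ≤ y := by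
  rw [minOrZero, dif_pos ⟨y, hy⟩]
  exact S.min'_le y hy

def shiftToZero (S : Finset ℤ) : Finset ℤ := S.image (· - minOrZero S)

theorem mem_shiftToZero {S : Finset ℤ} {x : ℤ} : x ∈ shiftToZero S ↔ x + minOrZero S ∈ S := by
  simp [shiftToZero, sub_eq_iff_eq_add]

theorem card_shiftToZero (S : Finset ℤ) : (shiftToZero S).card = S.card :=
  card_image_of_injective _ sub_left_injective

theorem eq_of_shiftToZero_eq {S S' : Finset ℤ} (hshift : shiftToZero S = shiftToZero S')
    (hmin : minOrZero S = minOrZero S') : S = S' := by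
  ext y
  have hS := mem_shiftToZero (S := S) (x := y - minOrZero S)
  have hS' := mem_shiftToZero (S := S') (x := y - minOrZero S)
  rw [hshift] at hS
  simp_all

noncomputable def normalizedSets (n h : ℕ) : Finset (Finset ℤ) :=
  ((Icc (1 : ℤ) (n - 1)).powersetCard (h - 1)).image (insert 0)

theorem card_normalizedSets_le (n h : ℕ) : (normalizedSets n h).card ≤ (n - 1).choose (h - 1) :=
  card_image_le.trans (by simp)

theorem card_of_mem_normalizedSets {n h : ℕ} (hh : 1 ≤ h) {T : Finset ℤ}
    (hT : T ∈ normalizedSets n h) : T.card = h := by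
  obtain ⟨U, hU, rfl⟩ := mem_image.1 hT
  rw [mem_powersetCard] at hU
  have hzero : (0 : ℤ) ∉ U := fun h0 => by simpa using (mem_Icc.1 (hU.1 h0)).1
  rw [card_insert_of_notMem hzero, hU.2]
  omega

theorem shiftToZero_mem_normalizedSets {n : ℕ} {S : Finset ℤ} (hSn : ↑S ⊆ Set.Icc (1 : ℤ) n)
    (hS : S.Nonempty) : shiftToZero S ∈ normalizedSets n S.card := by
  have hzero : (0 : ℤ) ∈ shiftToZero S := mem_shiftToZero.2 (by simpa using minOrZero_mem hS)
  refine mem_image.2 ⟨(shiftToZero S).erase 0, mem_powersetCard.2 ⟨fun x hx => ?_, ?_⟩,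
    insert_erase hzero⟩
  · obtain ⟨hx0, hx⟩ := mem_erase.1 hx
    have hxS := mem_shiftToZero.1 hx
    have hmin_le := minOrZero_le hxS
    have hmin_ge := (hSn (minOrZero_mem hS)).1
    have hle := (hSn hxS).2
    rw [mem_Icc]
    omega
  · rw [card_erase_of_mem hzero, card_shiftToZero]

theorem IsChgSet.choose_card_le {g h n : ℕ} (hh : 1 ≤ h) {A : Finset ℤ}
    (hAn : ↑A ⊆ Set.Icc (1 : ℤ) n) (hA : IsChgSet h g ↑A) :
    A.card.choose h ≤ (g - 1) * (n - 1).choose (h - 1) := by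
  classical
  have hmaps : ∀ S ∈ A.powersetCard h, shiftToZero S ∈ normalizedSets n h := by
    intro S hS
    obtain ⟨hSA, rfl⟩ := mem_powersetCard.1 hS
    exact shiftToZero_mem_normalizedSets ((coe_subset.2 hSA).trans hAn) (card_pos.1 hh)
  have hfibre : ∀ T ∈ normalizedSets n h,
      ((A.powersetCard h).filter (shiftToZero · = T)).card ≤ g - 1 := by
    intro T hT
    set F := (A.powersetCard h).filter (shiftToZero · = T)
    have hinj : Set.InjOn minOrZero F := fun S hS S' hS' hmin =>
      eq_of_shiftToZero_eq (((mem_filter.1 hS).2).trans (mem_filter.1 hS').2.symm) hmin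
    have htranslates : ∀ k ∈ F.image minOrZero, ∀ x ∈ T, x + k ∈ (A : Set ℤ) := by
      simp only [mem_image]
      rintro _ ⟨S, hS, rfl⟩ x hx
      obtain ⟨hSA, rfl⟩ := mem_filter.1 hS
      exact (mem_powersetCard.1 hSA).1 (mem_shiftToZero.1 hx)
    have hlt := hA.card_lt_s14 (card_of_mem_normalizedSets hh hT) htranslates
    rw [card_image_of_injOn hinj] at hlt
    omega
  calc A.card.choose h = (A.powersetCard h).card := (card_powersetCard h A).symm
    _ ≤ (g - 1) * (normalizedSets n h).card := card_le_mul_card_image_of_maps_to hmaps _ hfibre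
    _ ≤ (g - 1) * (n - 1).choose (h - 1) := Nat.mul_le_mul_left _ (card_normalizedSets_le n h)

theorem Nat.pow_le_two_pow_mul_descFactorial {m h : ℕ} (hm : 2 * h ≤ m) :
    m ^ h ≤ 2 ^ h * m.descFactorial h :=
  calc m ^ h ≤ (2 * (m + 1 - h)) ^ h := Nat.pow_le_pow_left (by omega) h
    _ = 2 ^ h * (m + 1 - h) ^ h := Nat.mul_pow _ _ _
    _ ≤ 2 ^ h * m.descFactorial h := Nat.mul_le_mul_left _ (m.pow_sub_le_descFactorial h)

theorem IsChgSet.card_pow_le {g h n : ℕ} (hg : 1 ≤ g) (hh : 1 ≤ h) (hn : 1 ≤ n) {A : Finset ℤ}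
    (hAn : ↑A ⊆ Set.Icc (1 : ℤ) n) (hA : IsChgSet h g ↑A) :
    A.card ^ h ≤ (2 * h * g) ^ h * n ^ (h - 1) := by
  rcases lt_or_ge A.card (2 * h) with hsmall | hlarge
  · calc A.card ^ h ≤ (2 * h * g) ^ h := Nat.pow_le_pow_left (by nlinarith) h
      _ ≤ (2 * h * g) ^ h * n ^ (h - 1) := Nat.le_mul_of_pos_right _ (Nat.pow_pos hn)
  · calc A.card ^ h ≤ 2 ^ h * (h.factorial * A.card.choose h) := by
          rw [← Nat.descFactorial_eq_factorial_mul_choose]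
          exact Nat.pow_le_two_pow_mul_descFactorial hlarge
      _ ≤ 2 ^ h * (h ^ h * ((g - 1) * (n - 1).choose (h - 1))) := by
          gcongr
          · exact Nat.factorial_le_pow h
          · exact hA.choose_card_le hh hAn
      _ ≤ 2 ^ h * (h ^ h * (g ^ h * n ^ (h - 1))) := by
          gcongr
          · exact (Nat.sub_le g 1).trans (Nat.le_self_pow (by omega) g)
          · exact (Nat.choose_le_pow _ _).trans (Nat.pow_le_pow_left (Nat.sub_le n 1) _)
      _ = (2 * h * g) ^ h * n ^ (h - 1) := by ring

theorem Real.le_mul_rpow_of_pow_le {x c y : ℝ} {h : ℕ} (hh : 1 ≤ h) (hx : 0 ≤ x) (hc : 0 ≤ c)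
    (hy : 0 ≤ y) (hxy : x ^ h ≤ c ^ h * y ^ (h - 1)) : x ≤ c * y ^ (1 - 1 / (h : ℝ)) := by
  have hpow : (y ^ (1 - 1 / (h : ℝ))) ^ h = y ^ (h - 1) := by
    rw [← Real.rpow_natCast, ← Real.rpow_mul hy, ← Real.rpow_natCast]
    congr 1
    push_cast [Nat.cast_sub hh]
    field_simp
  rw [← pow_le_pow_iff_left₀ hx (by positivity) (by omega : h ≠ 0), mul_pow, hpow]
  exact hxy

theorem stmt15 (g h : ℕ) (hgh : h ≤ g) (hh : 2 ≤ h) :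
    ∃ C : ℝ, 0 < C ∧ ∀ n : ℕ, 0 < n → ∀ A : Finset ℤ,
      ↑A ⊆ Set.Icc (1 : ℤ) n → IsChgSet h g ↑A →
      (A.card : ℝ) ≤ C * (n : ℝ) ^ (1 - (1 : ℝ) / h) := by
  have hg_pos : (0 : ℝ) < g := by exact_mod_cast (show 0 < g by omega)
  have hh_pos : (0 : ℝ) < h := by exact_mod_cast (show 0 < h by omega)
  refine ⟨2 * h * g, by positivity, fun n hn A hAn hA => ?_⟩
  have hbound := hA.card_pow_le (by omega) (by omega) hn hAn
  refine Real.le_mul_rpow_of_pow_le (by omega) (by positivity) (by positivity) (by positivity) ?_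
  exact_mod_cast hbound
end
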